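/- arXiv:0910.5429 — 4 statements merged into one kernel-verified Lean document; each statement's English description precedes it below -/
import Mathlib

section
/- The matrix-tree theorem: for a connected multigraph G with n vertices and signed incidence matrix E (with one vertex column removed), and for any set U of n-1 edges, the determinant of the square submatrix of E given by the rows indexed by U lies in {-1, 0, 1}, and it is nonzero if and only if U is the edge set of a spanning tree of G. -/
/-- A finite multigraph with oriented edges: each edge has a source and a target vertex.
Self-loops (src = tgt) and parallel edges are allowed. -/
structure Multigraph (E V : Type*) where
  src : E → V
  tgt : E → V

namespace Multigraph

variable {E V : Type*}

/-- Two vertices are adjacent via an edge of the subset `F`. -/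
def Adj (G : Multigraph E V) (F : Finset E) (a b : V) : Prop :=
  ∃ e ∈ F, (G.src e = a ∧ G.tgt e = b) ∨ (G.src e = b ∧ G.tgt e = a)

/-- Reachability (connectivity) using only edges in `F`. -/
def Reach (G : Multigraph E V) (F : Finset E) : V → V → Prop :=
  Relation.ReflTransGen (G.Adj F)

/-- `T` is (the edge set of) a spanning tree of `G`: it connects all vertices and has
`|V| - 1` edges. -/
def IsSpanningTree (G : Multigraph E V) [Fintype V] (T : Finset E) : Prop :=
  (∀ v w : V, G.Reach T v w) ∧ T.card + 1 = Fintype.card V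

/-- `G` is connected. -/
def Connected (G : Multigraph E V) [Fintype E] [Fintype V] : Prop :=
  ∀ v w : V, G.Reach Finset.univ v w

/-- The signed incidence matrix entry of edge `e` at vertex `v`:
`+1` if `e` begins at `v`, `-1` if `e` ends at `v`, `0` otherwise (in particular `0`
for self-loops). -/
def inc (G : Multigraph E V) (R : Type*) [Ring R] [DecidableEq V] (e : E) (v : V) : R :=
  (if G.src e = v then 1 else 0) - (if G.tgt e = v then 1 else 0)

open Classical in
/-- The Kirchhoff (graph) polynomial `Ψ_G = Σ_T Π_{e ∉ T} α_e`, sum over spanning trees. -/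
noncomputable def kirchhoff (G : Multigraph E V) [Fintype E] [DecidableEq E] [Fintype V] :
    MvPolynomial E ℚ :=
  ∑ T : Finset E, if G.IsSpanningTree T then ∏ e ∈ Tᶜ, MvPolynomial.X e else 0

/-- `F` is a spanning forest of `G` whose trees realize the partition `parts` of a subset of
the vertices: it has `|V| - |parts|` edges (forcing acyclicity), vertices in the same part
are connected, vertices in different parts are disconnected, and every vertex lies in the
tree of some part. -/
def IsSpanningForest (G : Multigraph E V) [Fintype V] (parts : Finset (Finset V))
    (F : Finset E) : Prop :=
  F.card + parts.card = Fintype.card V ∧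
  (∀ p ∈ parts, ∀ v ∈ p, ∀ w ∈ p, G.Reach F v w) ∧
  (∀ p ∈ parts, ∀ q ∈ parts, p ≠ q → ∀ v ∈ p, ∀ w ∈ q, ¬ G.Reach F v w) ∧
  (∀ v : V, ∃ p ∈ parts, ∃ w ∈ p, G.Reach F v w)

open Classical in
/-- The spanning forest polynomial `Φ^P_G = Σ_F Π_{e ∉ F} α_e`. -/
noncomputable def forestPoly (G : Multigraph E V) [Fintype E] [DecidableEq E] [Fintype V]
    (parts : Finset (Finset V)) : MvPolynomial E ℚ :=
  ∑ F : Finset E, if G.IsSpanningForest parts F then ∏ e ∈ Fᶜ, MvPolynomial.X e else 0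

end Multigraph

/-- `parts` is a set partition (of the union of its parts): parts are nonempty and
pairwise disjoint. -/
def IsSetPartition {V : Type*} (parts : Finset (Finset V)) : Prop :=
  ∅ ∉ parts ∧ ∀ p ∈ parts, ∀ q ∈ parts, p ≠ q → Disjoint p q

/-- `parts` is a set partition of the finite vertex set `W`. -/
def IsPartitionOf {V : Type*} (W : Finset V) (parts : Finset (Finset V)) : Prop :=
  IsSetPartition parts ∧ (∀ p ∈ parts, p ⊆ W) ∧ ∀ v ∈ W, ∃ p ∈ parts, v ∈ p
namespace Multigraph

variable {E V : Type*}

/-- The matrix `M_G(·,·)_K`: the reduced block matrix `[[A, 𝓔],[-𝓔ᵀ, 0]]` (one vertex `v0`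
removed) in which the variables of the edges in `K` have been set to `0`. -/
noncomputable def bigMatK (G : Multigraph E V) [DecidableEq E] [DecidableEq V] (v0 : V) (K : Finset E) :
    Matrix (E ⊕ {v : V // v ≠ v0}) (E ⊕ {v : V // v ≠ v0}) (MvPolynomial E ℚ) :=
  Matrix.fromBlocks (Matrix.diagonal fun e => if e ∈ K then 0 else MvPolynomial.X e)
    (Matrix.of fun e (v : {v : V // v ≠ v0}) => G.inc (MvPolynomial E ℚ) e ↑v)
    (Matrix.of fun (v : {v : V // v ≠ v0}) e => -G.inc (MvPolynomial E ℚ) e ↑v)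
    0

/-- The Dodgson polynomial `Ψ^{I,J}_{G,K}`: the determinant of `M_G` with the rows indexed
by `I` and the columns indexed by `J` deleted and the variables of `K` set to zero.  The
rows and columns are enumerated in increasing order, which fixes the sign. -/
noncomputable def dodgson (G : Multigraph E V) [Fintype E] [LinearOrder E] [Fintype V]
    [DecidableEq V] (v0 : V) (I J K : Finset E) : MvPolynomial E ℚ :=
  if h : I.card = J.card then
    Matrix.det (Matrix.of fun r c : Fin (Iᶜ.card) ⊕ {v : V // v ≠ v0} =>
      G.bigMatK v0 K
        (Sum.map (fun i => ((Iᶜ.orderIsoOfFin rfl) i : E)) id r)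
        (Sum.map (fun j => ((Jᶜ.orderIsoOfFin (by simp [Finset.card_compl, h])) j : E)) id c))
  else 0

/-- The determinant of the square submatrix of the reduced signed incidence matrix of `G`
(with the column of the vertex `v0` removed) given by the rows indexed by the edge set `S`
(rows and columns enumerated in increasing order); junk value `0` if `S` does not have
`|V| - 1` elements. -/
noncomputable def rowDet (G : Multigraph E V) [Fintype E] [LinearOrder E] [Fintype V]
    [LinearOrder V] (v0 : V) (S : Finset E) : ℚ :=
  if h : S.card = Fintype.card V - 1 then
    Matrix.det (Matrix.of fun i j : Fin (Fintype.card V - 1) =>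
      G.inc ℚ ((S.orderIsoOfFin h) i : E)
        (((Finset.univ.erase v0).orderIsoOfFin
          (by rw [Finset.card_erase_of_mem (Finset.mem_univ v0), Finset.card_univ])) j : V))
  else 0

/-- `𝓔_G(S)`: the determinant of the reduced incidence matrix with the rows `S` deleted
(and the column of `v0` deleted). -/
noncomputable def detE (G : Multigraph E V) [Fintype E] [LinearOrder E] [Fintype V]
    [LinearOrder V] (v0 : V) (S : Finset E) : ℚ :=
  G.rowDet v0 Sᶜ

end Multigraph

/-!
Each row of the incidence matrix has at most one entry `1` and at most one entry `-1`. In a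
square submatrix, either some row has a single nonzero entry, and the determinant expands
along it, or every row sums to zero and the determinant vanishes; so every square submatrix
has determinant in `{-1, 0, 1}`.

A kernel vector of the reduced submatrix `E(U)` is a vertex potential vanishing at the deleted
vertex `v0` which takes equal values at both ends of every edge of `U`. Such a potential is
constant on the components of `(V, U)`, so it must vanish precisely when `U` connects every
vertex to `v0`; with `|U| = n - 1` this means that `U` is a spanning tree.
-/

namespace Multigraph

open Matrix

variable {E V : Type*} {G : Multigraph E V} {F : Finset E}

theorem Adj.symm {a b : V} : G.Adj F a b → G.Adj F b a := by
  rintro ⟨e, he, h⟩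
  exact ⟨e, he, h.symm⟩

theorem Reach.symm {a b : V} (h : G.Reach F a b) : G.Reach F b a := by
  induction h with
  | refl => exact .refl
  | tail _ hbc ih => exact .head hbc.symm ih

theorem Reach.apply_eq {α : Type*} {g : V → α} (hg : ∀ e ∈ F, g (G.src e) = g (G.tgt e))
    {a b : V} (h : G.Reach F a b) : g a = g b := by
  induction h with
  | refl => rfl
  | tail _ hbc ih =>
    obtain ⟨e, he, ⟨rfl, rfl⟩ | ⟨rfl, rfl⟩⟩ := hbc
    exacts [ih.trans (hg e he), ih.trans (hg e he).symm]

theorem reach_src_iff_reach_tgt {e : E} (he : e ∈ F) (a : V) :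
    G.Reach F a (G.src e) ↔ G.Reach F a (G.tgt e) :=
  ⟨fun h => h.tail ⟨e, he, .inl ⟨rfl, rfl⟩⟩, fun h => h.tail ⟨e, he, .inr ⟨rfl, rfl⟩⟩⟩

theorem isSpanningTree_iff_forall_reach [Fintype V] {T : Finset E} (v0 : V)
    (hT : T.card = Fintype.card V - 1) : G.IsSpanningTree T ↔ ∀ v, G.Reach T v0 v := by
  have : 0 < Fintype.card V := Fintype.card_pos_iff.mpr ⟨v0⟩
  exact ⟨fun h v => h.1 v0 v, fun h => ⟨fun v w => (h v).symm.trans (h w), by omega⟩⟩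

variable [DecidableEq V] {R : Type*} [CommRing R]

theorem sum_inc_mul (G : Multigraph E V) (e : E) {S : Finset V} {g : V → R}
    (hg : ∀ v ∉ S, g v = 0) : ∑ v ∈ S, G.inc R e v * g v = g (G.src e) - g (G.tgt e) := by
  simp only [inc, sub_mul, ite_mul, one_mul, zero_mul, Finset.sum_sub_distrib,
    Finset.sum_ite_eq]
  congr 1 <;> exact ite_eq_left_iff.mpr fun h => (hg _ h).symm

theorem submatrix_inc_mulVec (G : Multigraph E V) {ι κ : Type*} [Fintype κ] (ρ : ι → E)
    {σ : κ → V} (hσ : σ.Injective) {g : V → R} (hg : ∀ v ∉ Set.range σ, g v = 0) :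
    (Matrix.of (G.inc R)).submatrix ρ σ *ᵥ (g ∘ σ) =
      fun i => g (G.src (ρ i)) - g (G.tgt (ρ i)) := by
  classical
  funext i
  rw [← G.sum_inc_mul (ρ i) (S := Finset.univ.image σ) (fun v hv => hg v (by simpa using hv)),
    Finset.sum_image (fun _ _ _ _ h => hσ h)]
  rfl

theorem inc_comp_eq_single_or_balanced (G : Multigraph E V) {κ : Type*} [DecidableEq κ]
    {σ : κ → V} (hσ : σ.Injective) (e : E) :
    (∃ b, ∃ s : SignType, (fun j => G.inc R e (σ j)) = Pi.single b (s : R)) ∨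
      (G.src e ∈ Set.range σ ↔ G.tgt e ∈ Set.range σ) := by
  by_cases hs : G.src e ∈ Set.range σ <;> by_cases ht : G.tgt e ∈ Set.range σ
  · exact .inr (iff_of_true hs ht)
  · obtain ⟨b, hb⟩ := hs
    refine .inl ⟨b, 1, funext fun j => ?_⟩
    have : G.tgt e ≠ σ j := fun h => ht ⟨j, h.symm⟩
    simp [inc, Pi.single_apply, ← hb, hσ.eq_iff, eq_comm (a := j), this]
  · obtain ⟨b, hb⟩ := ht
    refine .inl ⟨b, -1, funext fun j => ?_⟩
    have : G.src e ≠ σ j := fun h => hs ⟨j, h.symm⟩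
    simp [inc, Pi.single_apply, ← hb, hσ.eq_iff, eq_comm (a := j), this, neg_ite]
  · exact .inr (iff_of_false hs ht)

theorem isTotallyUnimodular_inc (G : Multigraph E V) :
    (Matrix.of (G.inc R)).IsTotallyUnimodular := by
  intro k
  induction k with
  | zero => exact fun _ _ _ _ => ⟨1, by simp⟩
  | succ k ih =>
    intro f σ hf hσ
    set A := (Matrix.of (G.inc R)).submatrix f σ
    by_cases hsingle : ∃ i b, ∃ s : SignType, A i = Pi.single b (s : R)
    · obtain ⟨i, b, s, hi⟩ := hsingle
      have hexp : A.det = (-1) ^ (i + b : ℕ) * s * (A.submatrix i.succAbove b.succAbove).det := by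
        rw [det_succ_row A i, Fintype.sum_eq_single b fun j hj => by simp [hi, hj], hi,
          Pi.single_eq_same]
      obtain ⟨t, ht⟩ := ih (f ∘ i.succAbove) (σ ∘ b.succAbove)
        (hf.comp Fin.succAbove_right_injective) (hσ.comp Fin.succAbove_right_injective)
      refine ⟨(-1) ^ (i + b : ℕ) * s * t, ?_⟩
      rw [hexp]
      change _ = _ * ((Matrix.of (G.inc R)).submatrix (f ∘ i.succAbove) (σ ∘ b.succAbove)).det
      simp [← ht]
    · have hbalanced : ∀ i, G.src (f i) ∈ Set.range σ ↔ G.tgt (f i) ∈ Set.range σ := fun i =>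
        (G.inc_comp_eq_single_or_balanced hσ (f i)).resolve_left fun h => hsingle ⟨i, h⟩
      classical
      -- `g ∘ σ` is the all-ones vector, so every row of `A` sums to zero
      let g : V → R := fun v => if v ∈ Set.range σ then 1 else 0
      have hA : A *ᵥ (g ∘ σ) = 0 := by
        rw [G.submatrix_inc_mulVec f hσ fun v hv => if_neg hv]
        funext i
        simp [hbalanced i]
      refine ⟨0, ?_⟩
      rw [SignType.coe_zero, eq_comm]
      exact det_eq_zero_of_mulVec_eq_zero_of_mem_nonZeroDivisors hA (i := 0)
        (by simp [g])

theorem det_submatrix_inc_ne_zero_iff (G : Multigraph E V) {K : Type*} [Field K]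
    {ι : Type*} [Fintype ι] [DecidableEq ι] {ρ : ι → E} (hρ : Set.range ρ = F)
    {σ : ι → V} (hσ : σ.Injective) {v0 : V} (hσv0 : ∀ v, v ∈ Set.range σ ↔ v ≠ v0) :
    ((Matrix.of (G.inc K)).submatrix ρ σ).det ≠ 0 ↔ ∀ v, G.Reach F v0 v := by
  classical
  have hρF : ∀ i, ρ i ∈ F := fun i => by rw [← Finset.mem_coe, ← hρ]; exact ⟨i, rfl⟩
  rw [Ne, ← exists_mulVec_eq_zero_iff, not_exists]
  constructor
  · intro hker v
    by_contra hv
    let g : V → K := fun w => if G.Reach F v0 w then 0 else 1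
    have hg : ∀ w ∉ Set.range σ, g w = 0 := fun w hw => by
      rw [hσv0, not_not] at hw
      exact if_pos (hw ▸ .refl)
    refine hker (g ∘ σ) ⟨fun h => ?_, ?_⟩
    · obtain ⟨j, rfl⟩ := (hσv0 v).2 (by rintro rfl; exact hv .refl)
      simpa [g, hv] using congrFun h j
    · rw [G.submatrix_inc_mulVec ρ hσ hg]
      funext i
      simp [g, reach_src_iff_reach_tgt (hρF i) v0]
  · rintro hreach x ⟨hx, hker⟩
    let g : V → K := Function.extend σ x 0
    have hg : ∀ w ∉ Set.range σ, g w = 0 := fun w hw => Function.extend_apply' _ _ _ hw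
    rw [← Function.extend_comp hσ x 0, G.submatrix_inc_mulVec ρ hσ hg] at hker
    have hedge : ∀ e ∈ F, g (G.src e) = g (G.tgt e) := by
      intro e he
      obtain ⟨i, rfl⟩ : e ∈ Set.range ρ := hρ ▸ he
      exact sub_eq_zero.mp (congrFun hker i)
    refine hx (funext fun j => ?_)
    rw [Pi.zero_apply, ← hσ.extend_apply x 0 j]
    change g (σ j) = 0
    rw [← (hreach (σ j)).apply_eq hedge]
    exact hg v0 fun h => (hσv0 v0).1 h rfl

end Multigraph

theorem matrix_tree_general {E V : Type*} [Fintype E] [LinearOrder E] [Fintype V] [LinearOrder V]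
    (G : Multigraph E V) (v0 : V) (U : Finset E)
    (hU : U.card = Fintype.card V - 1) :
    G.rowDet v0 U ∈ ({-1, 0, 1} : Set ℚ) ∧
      (G.rowDet v0 U ≠ 0 ↔ G.IsSpanningTree U) := by
  have hcard : (Finset.univ.erase v0).card = Fintype.card V - 1 := by simp
  let ρ : Fin (Fintype.card V - 1) → E := fun i => U.orderIsoOfFin hU i
  let σ : Fin (Fintype.card V - 1) → V := fun j => (Finset.univ.erase v0).orderIsoOfFin hcard j
  have hρ : ρ.Injective := Subtype.val_injective.comp (OrderIso.injective _)
  have hσ : σ.Injective := Subtype.val_injective.comp (OrderIso.injective _)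
  have hdet : G.rowDet v0 U = ((Matrix.of (G.inc ℚ)).submatrix ρ σ).det := by
    rw [Multigraph.rowDet, dif_pos hU]; rfl
  have hρU : Set.range ρ = U := by simp [ρ]
  have hσv0 : ∀ v, v ∈ Set.range σ ↔ v ≠ v0 := by simp [σ]
  rw [hdet, G.det_submatrix_inc_ne_zero_iff hρU hσ hσv0,
    Multigraph.isSpanningTree_iff_forall_reach v0 hU]
  refine ⟨?_, Iff.rfl⟩
  simpa [SignType.range_eq, Set.insert_comm] using
    G.isTotallyUnimodular_inc (R := ℚ) _ ρ σ hρ hσ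

/-- **matrix-tree theorem.**  For a connected multigraph `G` with `n`
vertices and any set `U` of `n - 1` edges, the determinant of the square submatrix of the
reduced signed incidence matrix (one vertex column removed) given by the rows indexed by
`U` lies in `{-1, 0, 1}`, and it is nonzero iff `U` is (the edge set of) a spanning tree. -/
theorem matrix_tree {E V : Type*} [Fintype E] [LinearOrder E] [Fintype V] [LinearOrder V]
    (G : Multigraph E V) (hconn : G.Connected) (v0 : V) (U : Finset E)
    (hU : U.card = Fintype.card V - 1) :
    G.rowDet v0 U ∈ ({-1, 0, 1} : Set ℚ) ∧
      (G.rowDet v0 U ≠ 0 ↔ G.IsSpanningTree U) :=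
  matrix_tree_general G v0 U hU
end

section
/- If e is an edge of G with endpoints v and w not lying in P, then the contracted spanning forest polynomial satisfies Φ^{P/e}_{G/e} = Σ_{p part of P} Σ_{p_1 ⊔ p_2 = p} Φ^{P\p, p_1∪{v}, p_2∪{w}}_{G\e}, where the inner sum is over ordered decompositions of p into two disjoint (possibly empty) subsets. -/
namespace Multigraph

variable {E V : Type*}

/-- The graph `G \ e0`, obtained by deleting the edge `e0` (vertices are kept). -/
def deleteEdge (G : Multigraph E V) (e0 : E) : Multigraph {e : E // e ≠ e0} V :=
  ⟨fun e => G.src e, fun e => G.tgt e⟩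

/-- The vertex map of the contraction `G / e0` (for `e0` not a self-loop): the target of
`e0` is identified with its source, every other vertex is unchanged. -/
def contractMap (G : Multigraph E V) [DecidableEq V] (e0 : E) (h : G.src e0 ≠ G.tgt e0)
    (v : V) : {v : V // v ≠ G.tgt e0} :=
  if hv : v = G.tgt e0 then ⟨G.src e0, h⟩ else ⟨v, hv⟩

/-- The graph `G / e0`, obtained by contracting the edge `e0` (deleting it and identifying
its two endpoints). -/
def contract (G : Multigraph E V) [DecidableEq V] (e0 : E) (h : G.src e0 ≠ G.tgt e0) :
    Multigraph {e : E // e ≠ e0} {v : V // v ≠ G.tgt e0} :=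
  ⟨fun e => G.contractMap e0 h (G.src e), fun e => G.contractMap e0 h (G.tgt e)⟩

end Multigraph

/-!
For an edge set `F` of `G \ e0`, reachability in `G / e0` is reachability in `G \ e0` with the
endpoints `v`, `w` of `e0` glued together. Hence `F` is a spanning forest of `G / e0` for `P / e0`
exactly when, in `G \ e0`, the trees of `v` and of `w` are distinct and together carry one part
`p = p₁ ⊔ p₂` of `P` (`p₁` on the side of `v`), while every other tree carries one other part.
The trees of `v` and `w` must be distinct because of the edge count: otherwise `F` would realize
`P` itself in `G \ e0`, which takes at least `|V| - |P|` edges, one more than `F` has.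
The pair `(p, p₁)` is read off from `F` (`p₁` is the set of vertices of parts reachable from `v`),
so every forest of `G / e0` is counted exactly once on the right-hand side.
-/

namespace Relation

variable {α : Type*} {r : α → α → Prop} {s t a b : α}

/-- For an equivalence `r`, the equivalence generated by `r` and the pair `(s, t)`. -/
def Glue (r : α → α → Prop) (s t : α) (a b : α) : Prop :=
  r a b ∨ (r a s ∧ r t b) ∨ (r a t ∧ r s b)

theorem Glue.of_rel (h : r a b) : Glue r s t a b :=
  Or.inl h

theorem glue_eq_of_rel (hr : Equivalence r) (hst : r s t) : Glue r s t = r := by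
  ext a b
  refine ⟨?_, Glue.of_rel⟩
  rintro (h | ⟨h₁, h₂⟩ | ⟨h₁, h₂⟩)
  · exact h
  · exact hr.trans (hr.trans h₁ hst) h₂
  · exact hr.trans (hr.trans h₁ (hr.symm hst)) h₂

theorem reflTransGen_or_pair_iff (r : α → α → Prop) (s t a b : α) :
    ReflTransGen (fun x y => r x y ∨ (x = s ∧ y = t) ∨ (x = t ∧ y = s)) a b ↔
      Glue (ReflTransGen r) s t a b := by
  constructor
  · intro h
    induction h with
    | refl => exact Or.inl .refl
    | tail _ hstep ih =>
      rcases hstep with hr | ⟨rfl, rfl⟩ | ⟨rfl, rfl⟩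
      · rcases ih with h | ⟨h₁, h₂⟩ | ⟨h₁, h₂⟩
        · exact Or.inl (h.tail hr)
        · exact Or.inr (Or.inl ⟨h₁, h₂.tail hr⟩)
        · exact Or.inr (Or.inr ⟨h₁, h₂.tail hr⟩)
      · rcases ih with h | ⟨h₁, -⟩ | ⟨h₁, -⟩
        · exact Or.inr (Or.inl ⟨h, .refl⟩)
        · exact Or.inr (Or.inl ⟨h₁, .refl⟩)
        · exact Or.inl h₁
      · rcases ih with h | ⟨h₁, -⟩ | ⟨h₁, -⟩
        · exact Or.inr (Or.inr ⟨h, .refl⟩)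
        · exact Or.inl h₁
        · exact Or.inr (Or.inr ⟨h₁, .refl⟩)
  · have lift : ReflTransGen r ≤
        ReflTransGen (fun x y => r x y ∨ (x = s ∧ y = t) ∨ (x = t ∧ y = s)) :=
      ReflTransGen.mono fun _ _ => Or.inl
    rintro (h | ⟨h₁, h₂⟩ | ⟨h₁, h₂⟩)
    · exact lift _ _ h
    · exact ((lift _ _ h₁).tail (Or.inr (Or.inl ⟨rfl, rfl⟩))).trans (lift _ _ h₂)
    · exact ((lift _ _ h₁).tail (Or.inr (Or.inr ⟨rfl, rfl⟩))).trans (lift _ _ h₂)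

theorem glue_self_left_iff (hr : Equivalence r) : Glue r s t s a ↔ r s a ∨ r t a := by
  constructor
  · rintro (h | ⟨-, h⟩ | ⟨-, h⟩)
    · exact Or.inl h
    · exact Or.inr h
    · exact Or.inl h
  · rintro (h | h)
    · exact Or.inl h
    · exact Or.inr (Or.inl ⟨hr.refl s, h⟩)

theorem Glue.rel_of_not_glue_self (hr : Equivalence r) (ha : ¬ Glue r s t s a)
    (hab : Glue r s t a b) : r a b := by
  rw [glue_self_left_iff hr] at ha
  rcases hab with h | ⟨h, -⟩ | ⟨h, -⟩
  · exact h
  · exact absurd (hr.symm h) fun h => ha (Or.inl h)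
  · exact absurd (hr.symm h) fun h => ha (Or.inr h)

end Relation

open Relation

theorem Equivalence.glue {α : Type*} {r : α → α → Prop} (hr : Equivalence r) (s t : α) :
    Equivalence (Glue r s t) := by
  have hself : ReflTransGen r = r :=
    le_antisymm (reflTransGen_le_of_equivalence_of_le hr le_rfl) fun _ _ => .single
  have hglue : Glue r s t =
      ReflTransGen (fun x y => r x y ∨ (x = s ∧ y = t) ∨ (x = t ∧ y = s)) := by
    ext a b
    rw [reflTransGen_or_pair_iff, hself]
  refine ⟨fun _ => Glue.of_rel (hr.refl _), ?_, ?_⟩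
  · rintro a b (h | ⟨h₁, h₂⟩ | ⟨h₁, h₂⟩)
    · exact Or.inl (hr.symm h)
    · exact Or.inr (Or.inr ⟨hr.symm h₂, hr.symm h₁⟩)
    · exact Or.inr (Or.inl ⟨hr.symm h₂, hr.symm h₁⟩)
  · rw [hglue]
    exact ReflTransGen.trans

theorem Finset.sum_sum_ite_eq_ite_exists {ι κ M : Type*} [AddCommMonoid M] (s : Finset ι)
    (t : ι → Finset κ) (P : ι → κ → Prop) [∀ i j, Decidable (P i j)]
    [Decidable (∃ i ∈ s, ∃ j ∈ t i, P i j)] (c : M)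
    (huniq : ∀ i ∈ s, ∀ j ∈ t i, ∀ i' ∈ s, ∀ j' ∈ t i', P i j → P i' j' → i = i' ∧ j = j') :
    ∑ i ∈ s, ∑ j ∈ t i, (if P i j then c else 0) =
      if ∃ i ∈ s, ∃ j ∈ t i, P i j then c else 0 := by
  split_ifs with h
  · obtain ⟨i, hi, j, hj, hij⟩ := h
    rw [Finset.sum_eq_single_of_mem i hi, Finset.sum_eq_single_of_mem j hj, if_pos hij]
    · exact fun j' hj' hne => if_neg fun h => hne (huniq _ hi _ hj' _ hi _ hj h hij).2
    · exact fun i' hi' hne => Finset.sum_eq_zero fun j' hj' =>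
        if_neg fun h => hne (huniq _ hi' _ hj' _ hi _ hj h hij).1
  · exact Finset.sum_eq_zero fun i hi => Finset.sum_eq_zero fun j hj =>
      if_neg fun h' => h ⟨i, hi, j, hj, h'⟩

def ClassesMatchParts {V : Type*} (r : V → V → Prop) (parts : Finset (Finset V)) : Prop :=
  (∀ p ∈ parts, ∀ a ∈ p, ∀ b ∈ p, r a b) ∧
  (∀ p ∈ parts, ∀ q ∈ parts, p ≠ q → ∀ a ∈ p, ∀ b ∈ q, ¬ r a b) ∧
  (∀ a, ∃ p ∈ parts, ∃ u ∈ p, r a u)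

theorem classesMatchParts_image_iff {V W : Type*} [DecidableEq W] {f : V → W}
    (hf : Function.Surjective f) {parts : Finset (Finset V)}
    (hinj : Set.InjOn (Finset.image f) parts) {r : W → W → Prop} :
    ClassesMatchParts r (parts.image (Finset.image f)) ↔
      ClassesMatchParts (fun a b => r (f a) (f b)) parts := by
  simp only [ClassesMatchParts, Finset.forall_mem_image, Finset.exists_mem_image]
  simp only [hf.forall]
  refine and_congr_right fun _ => and_congr_left fun _ =>
    forall₂_congr fun p hp => forall₂_congr fun q hq => ?_
  rw [hinj.ne_iff hp hq]

def splitParts {V : Type*} [DecidableEq V] (v w : V) (parts : Finset (Finset V))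
    (p p₁ : Finset V) : Finset (Finset V) :=
  insert (insert v p₁) (insert (insert w (p \ p₁)) (parts.erase p))

section Split

variable {V : Type*} [DecidableEq V] {r : V → V → Prop} {v w : V}
  {parts : Finset (Finset V)} {p p₁ : Finset V}

theorem mem_splitParts {q : Finset V} :
    q ∈ splitParts v w parts p p₁ ↔
      q = insert v p₁ ∨ q = insert w (p \ p₁) ∨ (q ≠ p ∧ q ∈ parts) := by
  simp only [splitParts, Finset.mem_insert, Finset.mem_erase]

theorem card_splitParts (hvw : v ≠ w) (hnotin : ∀ q ∈ parts, v ∉ q ∧ w ∉ q)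
    (hp : p ∈ parts) : (splitParts v w parts p p₁).card = parts.card + 1 := by
  have hvB : v ∉ insert w (p \ p₁) := by simp [hvw, (hnotin p hp).1]
  rw [splitParts, Finset.card_insert_of_notMem, Finset.card_insert_of_notMem,
    Finset.card_erase_add_one hp]
  · exact fun h => (hnotin _ (Finset.mem_of_mem_erase h)).2 (Finset.mem_insert_self w _)
  · simp only [Finset.mem_insert, Finset.mem_erase, not_or]
    exact ⟨fun h => hvB (h ▸ Finset.mem_insert_self v p₁),
      fun h => (hnotin _ h.2).1 (Finset.mem_insert_self v p₁)⟩

theorem ClassesMatchParts.rel_iff_of_splitParts (hvw : v ≠ w) (hvp : v ∉ p)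
    (h : ClassesMatchParts r (splitParts v w parts p p₁)) {u : V} (hu : u ∈ p) :
    (r v u ↔ u ∈ p₁) ∧ (r w u ↔ u ∉ p₁) := by
  have hA : insert v p₁ ∈ splitParts v w parts p p₁ := mem_splitParts.2 (Or.inl rfl)
  have hB : insert w (p \ p₁) ∈ splitParts v w parts p p₁ :=
    mem_splitParts.2 (Or.inr (Or.inl rfl))
  have hAB : insert v p₁ ≠ insert w (p \ p₁) := fun hAB => by
    have := hAB ▸ Finset.mem_insert_self v p₁
    simp [hvw, hvp] at this
  by_cases hu₁ : u ∈ p₁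
  · refine ⟨iff_of_true (h.1 _ hA v (by simp) u (by simp [hu₁])) hu₁,
      iff_of_false ?_ (by simpa)⟩
    exact h.2.1 _ hB _ hA hAB.symm w (by simp) u (by simp [hu₁])
  · refine ⟨iff_of_false ?_ hu₁,
      iff_of_true (h.1 _ hB w (by simp) u (by simp [hu, hu₁])) hu₁⟩
    exact h.2.1 _ hA _ hB hAB v (by simp) u (by simp [hu, hu₁])

theorem ClassesMatchParts.not_rel_of_splitParts_of_ne
    (h : ClassesMatchParts r (splitParts v w parts p p₁)) {q : Finset V} (hq : q ∈ parts)
    (hqp : q ≠ p) (hvq : v ∉ q) (hwq : w ∉ q) {u : V} (hu : u ∈ q) :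
    ¬ r v u ∧ ¬ r w u := by
  have hQ : q ∈ splitParts v w parts p p₁ := mem_splitParts.2 (Or.inr (Or.inr ⟨hqp, hq⟩))
  exact ⟨h.2.1 _ (mem_splitParts.2 (Or.inl rfl)) q hQ (by rintro rfl; simp at hvq)
      v (by simp) u hu,
    h.2.1 _ (mem_splitParts.2 (Or.inr (Or.inl rfl))) q hQ (by rintro rfl; simp at hwq)
      w (by simp) u hu⟩

theorem ClassesMatchParts.glue_of_splitParts (hr : Equivalence r) (hvw : v ≠ w)
    (hnotin : ∀ q ∈ parts, v ∉ q ∧ w ∉ q) (hp : p ∈ parts) (hpne : p.Nonempty)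
    (h : ClassesMatchParts r (splitParts v w parts p p₁)) :
    ClassesMatchParts (Glue r v w) parts := by
  have hg := hr.glue v w
  have hglue_p : ∀ u ∈ p, Glue r v w v u := fun u hu => by
    have hvu := h.rel_iff_of_splitParts hvw (hnotin p hp).1 hu
    rw [glue_self_left_iff hr]
    by_cases hu₁ : u ∈ p₁
    · exact Or.inl (hvu.1.2 hu₁)
    · exact Or.inr (hvu.2.2 hu₁)
  have hglue_q : ∀ q ∈ parts, q ≠ p → ∀ u ∈ q, ¬ Glue r v w v u := fun q hq hqp u hu => by
    rw [glue_self_left_iff hr, not_or]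
    exact h.not_rel_of_splitParts_of_ne hq hqp (hnotin q hq).1 (hnotin q hq).2 hu
  obtain ⟨u₀, hu₀⟩ := hpne
  refine ⟨fun q hq a ha b hb => ?_, fun q hq q' hq' hqq' a ha b hb hab => ?_, fun a => ?_⟩
  · by_cases hqp : q = p
    · subst hqp
      exact hg.trans (hg.symm (hglue_p a ha)) (hglue_p b hb)
    · exact Glue.of_rel (h.1 q (mem_splitParts.2 (Or.inr (Or.inr ⟨hqp, hq⟩))) a ha b hb)
  · by_cases hqp : q = p
    · subst hqp
      exact hglue_q q' hq' (Ne.symm hqq') b hb (hg.trans (hglue_p a ha) hab)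
    by_cases hq'p : q' = p
    · subst hq'p
      exact hglue_q q hq hqp a ha (hg.trans (hglue_p b hb) (hg.symm hab))
    exact h.2.1 q (mem_splitParts.2 (Or.inr (Or.inr ⟨hqp, hq⟩)))
      q' (mem_splitParts.2 (Or.inr (Or.inr ⟨hq'p, hq'⟩))) hqq' a ha b hb
      (hab.rel_of_not_glue_self hr (hglue_q q hq hqp a ha))
  · obtain ⟨X, hX, u, hu, hau⟩ := h.2.2 a
    obtain hvu | ⟨-, hX⟩ : Glue r v w v u ∨ (X ≠ p ∧ X ∈ parts) := by
      rcases mem_splitParts.1 hX with rfl | rfl | hX'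
      · exact Or.inl ((glue_self_left_iff hr).2 (Or.inl (h.1 _ hX v (by simp) u hu)))
      · exact Or.inl ((glue_self_left_iff hr).2 (Or.inr (h.1 _ hX w (by simp) u hu)))
      · exact Or.inr hX'
    · exact ⟨p, hp, u₀, hu₀,
        hg.trans (Glue.of_rel hau) (hg.trans (hg.symm hvu) (hglue_p u₀ hu₀))⟩
    · exact ⟨X, hX, u, hu, Glue.of_rel hau⟩

theorem ClassesMatchParts.eq_of_splitParts (hvw : v ≠ w)
    (hnotin : ∀ q ∈ parts, v ∉ q ∧ w ∉ q) {p' p₁' : Finset V} (hp : p ∈ parts)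
    (hpne : p.Nonempty) (hp₁ : p₁ ⊆ p) (hp₁' : p₁' ⊆ p')
    (h : ClassesMatchParts r (splitParts v w parts p p₁))
    (h' : ClassesMatchParts r (splitParts v w parts p' p₁')) :
    p = p' ∧ p₁ = p₁' := by
  obtain rfl : p = p' := by
    by_contra hpp'
    obtain ⟨u, hu⟩ := hpne
    have hvu := h.rel_iff_of_splitParts hvw (hnotin p hp).1 hu
    have hnot := h'.not_rel_of_splitParts_of_ne hp hpp' (hnotin p hp).1 (hnotin p hp).2 hu
    by_cases hu₁ : u ∈ p₁
    · exact hnot.1 (hvu.1.2 hu₁)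
    · exact hnot.2 (hvu.2.2 hu₁)
  refine ⟨rfl, Finset.ext fun u => ?_⟩
  by_cases hu : u ∈ p
  · exact (h.rel_iff_of_splitParts hvw (hnotin p hp).1 hu).1.symm.trans
      (h'.rel_iff_of_splitParts hvw (hnotin p hp).1 hu).1
  · exact iff_of_false (fun h => hu (hp₁ h)) (fun h => hu (hp₁' h))

theorem ClassesMatchParts.exists_splitParts_of_glue (hr : Equivalence r) (hrvw : ¬ r v w)
    (h : ClassesMatchParts (Glue r v w) parts) :
    ∃ p ∈ parts, ∃ p₁ ∈ p.powerset, ClassesMatchParts r (splitParts v w parts p p₁) := by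
  classical
  have hg := hr.glue v w
  obtain ⟨p, hp, u₀, hu₀, hvu₀⟩ := h.2.2 v
  have hglue_p : ∀ u ∈ p, Glue r v w v u := fun u hu => hg.trans hvu₀ (h.1 p hp u₀ hu₀ u hu)
  have hglue_q : ∀ q ∈ parts, q ≠ p → ∀ u ∈ q, ¬ Glue r v w v u := fun q hq hqp u hu hvu =>
    h.2.1 p hp q hq (Ne.symm hqp) u₀ hu₀ u hu (hg.trans (hg.symm hvu₀) hvu)
  refine ⟨p, hp, p.filter (r v), Finset.mem_powerset.2 (Finset.filter_subset _ _), ?_⟩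
  have hA_mem : insert v (p.filter (r v)) ∈ splitParts v w parts p (p.filter (r v)) :=
    mem_splitParts.2 (Or.inl rfl)
  have hB_mem : insert w (p \ p.filter (r v)) ∈ splitParts v w parts p (p.filter (r v)) :=
    mem_splitParts.2 (Or.inr (Or.inl rfl))
  have hA : ∀ x ∈ insert v (p.filter (r v)), r v x := by
    simp only [Finset.mem_insert, Finset.mem_filter]
    rintro x (rfl | ⟨-, hx⟩)
    exacts [hr.refl x, hx]
  have hB : ∀ x ∈ insert w (p \ p.filter (r v)), r w x := by
    simp only [Finset.mem_insert, Finset.mem_sdiff, Finset.mem_filter, not_and]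
    rintro x (rfl | ⟨hx, hvx⟩)
    · exact hr.refl x
    · exact ((glue_self_left_iff hr).1 (hglue_p x hx)).resolve_left (hvx hx)
  refine ⟨fun X hX a ha b hb => ?_, fun X hX Y hY hXY x hx y hy hxy => ?_, fun a => ?_⟩
  · rcases mem_splitParts.1 hX with rfl | rfl | ⟨hXp, hX⟩
    · exact hr.trans (hr.symm (hA a ha)) (hA b hb)
    · exact hr.trans (hr.symm (hB a ha)) (hB b hb)
    · exact (h.1 X hX a ha b hb).rel_of_not_glue_self hr (hglue_q X hX hXp a ha)
  · rcases mem_splitParts.1 hX with rfl | rfl | ⟨hXp, hX⟩ <;>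
      rcases mem_splitParts.1 hY with rfl | rfl | ⟨hYp, hY⟩
    · exact hXY rfl
    · exact hrvw (hr.trans (hr.trans (hA x hx) hxy) (hr.symm (hB y hy)))
    · exact hglue_q Y hY hYp y hy (Glue.of_rel (hr.trans (hA x hx) hxy))
    · exact hrvw (hr.trans (hr.trans (hA y hy) (hr.symm hxy)) (hr.symm (hB x hx)))
    · exact hXY rfl
    · exact hglue_q Y hY hYp y hy
        ((glue_self_left_iff hr).2 (Or.inr (hr.trans (hB x hx) hxy)))
    · exact hglue_q X hX hXp x hx (Glue.of_rel (hr.trans (hA y hy) (hr.symm hxy)))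
    · exact hglue_q X hX hXp x hx
        ((glue_self_left_iff hr).2 (Or.inr (hr.trans (hB y hy) (hr.symm hxy))))
    · exact h.2.1 X hX Y hY hXY x hx y hy (Glue.of_rel hxy)
  · obtain ⟨q, hq, u, hu, hau⟩ := h.2.2 a
    by_cases hqp : q = p
    · subst hqp
      rcases (glue_self_left_iff hr).1 (hg.trans (hglue_p u hu) (hg.symm hau)) with hva | hwa
      · exact ⟨_, hA_mem, v, Finset.mem_insert_self _ _, hr.symm hva⟩
      · exact ⟨_, hB_mem, w, Finset.mem_insert_self _ _, hr.symm hwa⟩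
    · exact ⟨q, mem_splitParts.2 (Or.inr (Or.inr ⟨hqp, hq⟩)), u, hu,
        hr.symm ((hg.symm hau).rel_of_not_glue_self hr (hglue_q q hq hqp u hu))⟩

end Split

namespace Multigraph

variable {E V : Type*}

theorem reach_equivalence (G : Multigraph E V) (F : Finset E) : Equivalence (G.Reach F) where
  refl _ := .refl
  symm h :=
    ReflTransGen.mono (fun _ _ ⟨e, he, h⟩ => ⟨e, he, h.symm⟩) _ _ (ReflTransGen.swap _ _ h)
  trans := ReflTransGen.trans

theorem reach_mono (G : Multigraph E V) {F F' : Finset E} (hF : F ⊆ F') :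
    G.Reach F ≤ G.Reach F' :=
  ReflTransGen.mono fun _ _ ⟨e, he, h⟩ => ⟨e, hF he, h⟩

theorem reach_empty_iff (G : Multigraph E V) {a b : V} : G.Reach ∅ a b ↔ a = b := by
  rw [Reach, reflTransGen_iff_eq fun _ ⟨e, he, _⟩ => Finset.notMem_empty e he, eq_comm]

theorem reach_insert_iff (G : Multigraph E V) [DecidableEq E] (e : E) (F : Finset E)
    (a b : V) : G.Reach (insert e F) a b ↔ Glue (G.Reach F) (G.src e) (G.tgt e) a b := by
  have hadj : G.Adj (insert e F) =
      fun x y => G.Adj F x y ∨ (x = G.src e ∧ y = G.tgt e) ∨ (x = G.tgt e ∧ y = G.src e) := by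
    ext x y
    simp only [Adj, Finset.mem_insert, exists_eq_or_imp]
    grind
  rw [Reach, hadj, reflTransGen_or_pair_iff]
  rfl

theorem isSpanningForest_iff [Fintype V] (G : Multigraph E V) (parts : Finset (Finset V))
    (F : Finset E) :
    G.IsSpanningForest parts F ↔
      F.card + parts.card = Fintype.card V ∧ ClassesMatchParts (G.Reach F) parts :=
  Iff.rfl

def reachSetoid (G : Multigraph E V) (F : Finset E) : Setoid V :=
  ⟨G.Reach F, G.reach_equivalence F⟩

theorem card_quotient_reachSetoid_le_insert [Finite V] [DecidableEq E] (G : Multigraph E V)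
    (e : E) (F : Finset E) :
    Nat.card (Quotient (G.reachSetoid F)) ≤
      Nat.card (Quotient (G.reachSetoid (insert e F))) + 1 := by
  classical
  let φ : Quotient (G.reachSetoid F) → Quotient (G.reachSetoid (insert e F)) :=
    Quotient.map' id fun _ _ => G.reach_mono (Finset.subset_insert e F) _ _
  -- adding `e` merges at most the class of `tgt e` into another one
  let g (x : Quotient (G.reachSetoid F)) : Option (Quotient (G.reachSetoid (insert e F))) :=
    if x = Quotient.mk'' (G.tgt e) then none else some (φ x)
  have hg : Function.Injective g := by
    refine Quotient.ind₂ fun a b hab => ?_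
    by_cases ha : (Quotient.mk'' a : Quotient (G.reachSetoid F)) = Quotient.mk'' (G.tgt e) <;>
      by_cases hb : (Quotient.mk'' b : Quotient (G.reachSetoid F)) = Quotient.mk'' (G.tgt e) <;>
      simp only [g, ha, hb, if_true, if_false, reduceCtorEq, Option.some_inj] at hab
    · exact ha.trans hb.symm
    · have hab : G.Reach (insert e F) a b := Quotient.exact' hab
      rcases (G.reach_insert_iff e F a b).1 hab with h | ⟨-, h⟩ | ⟨h, -⟩
      · exact Quotient.sound' h
      · exact absurd (Quotient.sound' ((G.reach_equivalence F).symm h)) hb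
      · exact absurd (Quotient.sound' h) ha
  calc Nat.card (Quotient (G.reachSetoid F))
      ≤ Nat.card (Option (Quotient (G.reachSetoid (insert e F)))) :=
        Nat.card_le_card_of_injective g hg
    _ = _ := Finite.card_option

theorem card_le_card_add_card_quotient_reachSetoid [Fintype V] (G : Multigraph E V)
    (F : Finset E) : Fintype.card V ≤ F.card + Nat.card (Quotient (G.reachSetoid F)) := by
  classical
  induction F using Finset.induction_on with
  | empty =>
    rw [Finset.card_empty, zero_add, ← Nat.card_eq_fintype_card]
    exact Nat.card_le_card_of_injective (Quotient.mk'' (s₁ := G.reachSetoid ∅))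
      fun a b h => G.reach_empty_iff.1 (Quotient.exact' h)
  | insert e F he ih =>
    have := G.card_quotient_reachSetoid_le_insert e F
    rw [Finset.card_insert_of_notMem he]
    omega

theorem card_le_card_add_card_of_classesMatchParts [Fintype V] (G : Multigraph E V)
    {F : Finset E} {parts : Finset (Finset V)} (h : ClassesMatchParts (G.Reach F) parts) :
    Fintype.card V ≤ F.card + parts.card := by
  classical
  choose f hf hfu using h.2.2
  have hinj : Function.Injective
      fun c : Quotient (G.reachSetoid F) => (⟨f c.out, hf c.out⟩ : parts) := by
    intro c d hcd
    obtain ⟨u, hu, hcu⟩ := hfu c.out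
    obtain ⟨u', hu', hdu'⟩ := hfu d.out
    have hfcd : f c.out = f d.out := congrArg Subtype.val hcd
    have hR := G.reach_equivalence F
    exact Quotient.out_equiv_out.1
      (hR.trans hcu (hR.trans (h.1 _ (hf d.out) u (hfcd ▸ hu) u' hu') (hR.symm hdu')))
  calc Fintype.card V ≤ F.card + Nat.card (Quotient (G.reachSetoid F)) :=
        G.card_le_card_add_card_quotient_reachSetoid F
    _ ≤ F.card + Nat.card parts := by grw [Nat.card_le_card_of_injective _ hinj]
    _ = F.card + parts.card := by rw [Nat.card_eq_fintype_card, Fintype.card_coe]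

section Contract

variable (G : Multigraph E V) [DecidableEq V] (e0 : E) (hloop : G.src e0 ≠ G.tgt e0)

theorem coe_contractMap (a : V) :
    (G.contractMap e0 hloop a : V) = if a = G.tgt e0 then G.src e0 else a := by
  unfold contractMap
  split_ifs <;> rfl

theorem contractMap_coe (x : {v : V // v ≠ G.tgt e0}) : G.contractMap e0 hloop x = x :=
  dif_neg x.2

theorem contractMap_eq_contractMap_iff {a b : V} :
    G.contractMap e0 hloop a = G.contractMap e0 hloop b ↔
      a = b ∨ (a = G.src e0 ∧ b = G.tgt e0) ∨ (a = G.tgt e0 ∧ b = G.src e0) := by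
  rw [← Subtype.coe_inj, coe_contractMap, coe_contractMap]
  grind

theorem injOn_image_contractMap :
    Set.InjOn (Finset.image (G.contractMap e0 hloop)) {q | G.tgt e0 ∉ q} := by
  have hval : ∀ q : Finset V, G.tgt e0 ∉ q →
      (q.image (G.contractMap e0 hloop)).image Subtype.val = q := fun q hq => by
    rw [Finset.image_image]
    conv_rhs => rw [← Finset.image_id (s := q)]
    exact Finset.image_congr fun a ha => by
      simp only [Function.comp_apply, coe_contractMap, id, if_neg (ne_of_mem_of_not_mem ha hq)]
  intro q hq q' hq' h
  rw [← hval q hq, ← hval q' hq', h]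

theorem reach_contract_iff (F : Finset {e : E // e ≠ e0}) (a b : V) :
    (G.contract e0 hloop).Reach F (G.contractMap e0 hloop a) (G.contractMap e0 hloop b) ↔
      Glue ((G.deleteEdge e0).Reach F) (G.src e0) (G.tgt e0) a b := by
  unfold Reach
  rw [← reflTransGen_or_pair_iff]
  set W := fun x y => (G.deleteEdge e0).Adj F x y ∨
    (x = G.src e0 ∧ y = G.tgt e0) ∨ (x = G.tgt e0 ∧ y = G.src e0)
  have hW : ∀ {a b}, G.contractMap e0 hloop a = G.contractMap e0 hloop b →
      ReflTransGen W a b := fun h => by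
    rcases (G.contractMap_eq_contractMap_iff e0 hloop).1 h with rfl | hab | hab
    exacts [.refl, .single (Or.inr (Or.inl hab)), .single (Or.inr (Or.inr hab))]
  have hstep : ∀ a b, W a b →
      ReflTransGen W (G.contractMap e0 hloop a) (G.contractMap e0 hloop b) := fun a b hab =>
    ((hW (G.contractMap_coe e0 hloop _)).trans (.single hab)).trans
      (hW (G.contractMap_coe e0 hloop _).symm)
  constructor
  · intro h
    refine (hW (G.contractMap_coe e0 hloop _).symm).trans
      ((ReflTransGen.lift' Subtype.val ?_ _ _ h).trans (hW (G.contractMap_coe e0 hloop _)))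
    rintro _ _ ⟨e, he, ⟨rfl, rfl⟩ | ⟨rfl, rfl⟩⟩
    · exact hstep _ _ (Or.inl ⟨e, he, Or.inl ⟨rfl, rfl⟩⟩)
    · exact hstep _ _ (Or.inl ⟨e, he, Or.inr ⟨rfl, rfl⟩⟩)
  · refine ReflTransGen.lift' (G.contractMap e0 hloop) ?_ a b
    rintro x y (⟨e, he, ⟨rfl, rfl⟩ | ⟨rfl, rfl⟩⟩ | ⟨rfl, rfl⟩ | ⟨rfl, rfl⟩)
    · exact .single ⟨e, he, Or.inl ⟨rfl, rfl⟩⟩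
    · exact .single ⟨e, he, Or.inr ⟨rfl, rfl⟩⟩
    all_goals
      simp only [Function.onFun,
        (G.contractMap_eq_contractMap_iff e0 hloop).2 (Or.inr (Or.inl ⟨rfl, rfl⟩))]
      exact .refl

end Contract

section Forest

variable [Fintype V] [DecidableEq V] (G : Multigraph E V) (e0 : E)
  {parts : Finset (Finset V)}

theorem isSpanningForest_contract_iff (hloop : G.src e0 ≠ G.tgt e0)
    (hnotin : ∀ p ∈ parts, G.tgt e0 ∉ p) (F : Finset {e : E // e ≠ e0}) :
    (G.contract e0 hloop).IsSpanningForest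
        (parts.image (Finset.image (G.contractMap e0 hloop))) F ↔
      F.card + parts.card + 1 = Fintype.card V ∧
        ClassesMatchParts (Glue ((G.deleteEdge e0).Reach F) (G.src e0) (G.tgt e0)) parts := by
  have hinj : Set.InjOn (Finset.image (G.contractMap e0 hloop)) parts :=
    (G.injOn_image_contractMap e0 hloop).mono hnotin
  have hsurj : Function.Surjective (G.contractMap e0 hloop) :=
    fun x => ⟨x, G.contractMap_coe e0 hloop x⟩
  have hreach : (fun a b => (G.contract e0 hloop).Reach F
      (G.contractMap e0 hloop a) (G.contractMap e0 hloop b)) =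
      Glue ((G.deleteEdge e0).Reach F) (G.src e0) (G.tgt e0) := by
    ext a b
    exact G.reach_contract_iff e0 hloop F a b
  have hcard : Fintype.card {v : V // v ≠ G.tgt e0} + 1 = Fintype.card V := by
    have : 0 < Fintype.card V := Fintype.card_pos_iff.2 ⟨G.tgt e0⟩
    simp only [ne_eq, Fintype.card_subtype_compl, Fintype.card_subtype_eq]
    omega
  rw [isSpanningForest_iff, classesMatchParts_image_iff hsurj hinj, hreach,
    Finset.card_image_of_injOn hinj, ← hcard, Nat.add_right_cancel_iff]

theorem isSpanningForest_contract_iff_exists_splitParts (hloop : G.src e0 ≠ G.tgt e0)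
    (hne : ∅ ∉ parts) (hnotin : ∀ p ∈ parts, G.src e0 ∉ p ∧ G.tgt e0 ∉ p)
    (F : Finset {e : E // e ≠ e0}) :
    (G.contract e0 hloop).IsSpanningForest
        (parts.image (Finset.image (G.contractMap e0 hloop))) F ↔
      ∃ p ∈ parts, ∃ p₁ ∈ p.powerset,
        (G.deleteEdge e0).IsSpanningForest (splitParts (G.src e0) (G.tgt e0) parts p p₁) F := by
  have hR := (G.deleteEdge e0).reach_equivalence F
  simp only [isSpanningForest_contract_iff G e0 hloop (fun p hp => (hnotin p hp).2),
    isSpanningForest_iff]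
  constructor
  · rintro ⟨hcard, h⟩
    have hrvw : ¬ (G.deleteEdge e0).Reach F (G.src e0) (G.tgt e0) := fun hrvw => by
      rw [glue_eq_of_rel hR hrvw] at h
      have := (G.deleteEdge e0).card_le_card_add_card_of_classesMatchParts h
      omega
    obtain ⟨p, hp, p₁, hp₁, hs⟩ := h.exists_splitParts_of_glue hR hrvw
    exact ⟨p, hp, p₁, hp₁, by rw [card_splitParts hloop hnotin hp]; omega, hs⟩
  · rintro ⟨p, hp, p₁, -, hcard, hs⟩
    rw [card_splitParts hloop hnotin hp] at hcard
    exact ⟨by omega, hs.glue_of_splitParts hR hloop hnotin hp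
      (Finset.nonempty_iff_ne_empty.2 fun h => hne (h ▸ hp))⟩

theorem eq_of_isSpanningForest_splitParts (hloop : G.src e0 ≠ G.tgt e0) (hne : ∅ ∉ parts)
    (hnotin : ∀ p ∈ parts, G.src e0 ∉ p ∧ G.tgt e0 ∉ p) {F : Finset {e : E // e ≠ e0}}
    {p p₁ p' p₁' : Finset V} (hp : p ∈ parts) (hp₁ : p₁ ⊆ p) (hp₁' : p₁' ⊆ p')
    (h : (G.deleteEdge e0).IsSpanningForest (splitParts (G.src e0) (G.tgt e0) parts p p₁) F)
    (h' : (G.deleteEdge e0).IsSpanningForest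
      (splitParts (G.src e0) (G.tgt e0) parts p' p₁') F) :
    p = p' ∧ p₁ = p₁' :=
  ClassesMatchParts.eq_of_splitParts hloop hnotin hp
    (Finset.nonempty_iff_ne_empty.2 fun h => hne (h ▸ hp)) hp₁ hp₁' h.2 h'.2

end Forest

end Multigraph

/-- If `e0` is an edge of `G` with (distinct) endpoints `v = src e0` and
`w = tgt e0` not lying in the partition `P`, then
`Φ^{P/e0}_{G/e0} = Σ_{p ∈ P} Σ_{p₁ ⊔ p₂ = p} Φ^{P∖p, p₁∪{v}, p₂∪{w}}_{G∖e0}`,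
the inner sum being over ordered decompositions of `p` into two disjoint (possibly empty)
subsets. -/
theorem forestPoly_contract_decomposition {E V : Type*} [Fintype E] [DecidableEq E]
    [Fintype V] [DecidableEq V] (G : Multigraph E V) (e0 : E)
    (hloop : G.src e0 ≠ G.tgt e0) (parts : Finset (Finset V))
    (hP : IsSetPartition parts)
    (hnotin : ∀ p ∈ parts, G.src e0 ∉ p ∧ G.tgt e0 ∉ p) :
    (G.contract e0 hloop).forestPoly
        (parts.image (Finset.image (G.contractMap e0 hloop)))
      = ∑ p ∈ parts, ∑ p1 ∈ p.powerset,
          (G.deleteEdge e0).forestPoly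
            (insert (insert (G.src e0) p1)
              (insert (insert (G.tgt e0) (p \ p1)) (parts.erase p))) := by
  classical
  unfold Multigraph.forestPoly
  rw [Finset.sum_congr rfl fun p _ => Finset.sum_comm, Finset.sum_comm]
  refine Finset.sum_congr rfl fun F _ => ?_
  refine (if_congr (G.isSpanningForest_contract_iff_exists_splitParts e0 hloop hP.1 hnotin F)
    rfl rfl).trans (Finset.sum_sum_ite_eq_ite_exists _ _ _ _ ?_).symm
  exact fun p hp p₁ hp₁ p' _ p₁' hp₁' h h' =>
    G.eq_of_isSpanningForest_splitParts e0 hloop hP.1 hnotin hp (Finset.mem_powerset.1 hp₁)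
      (Finset.mem_powerset.1 hp₁') h h'
end

section
/- Vanishing of split Dodgson polynomials: if G is a two-vertex join of G_1 and G_2, and edges i, j lie in G_1 while edges k, l lie in G_2, then Ψ^{ij,kl}_G = 0. -/
/-!
Over the fraction field, the matrix of `Ψ^{ij,kl}_G` is singular. Its rows are indexed by the
edges other than `i, j` and the vertices other than `v0`, its columns by the edges other than
`k, l` and the same vertices, and its vertex-vertex block is zero. Strike out the edge rows of
`G₁` and the edge columns of `G₂`. The remaining edge-edge entries vanish, because no edge lies in
both graphs, so what is left consists of incidence vectors of edges of `G₂` (as rows) and of `G₁`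
(as columns). Incidence vectors of edges inside a vertex set `S` span a space of dimension at
most `|S| - 1`. Hence the rank is at most
`(|E₁| - 2) + (|E₂| - 2) + (|S₁| - 1) + (|S₂| - 1) = |E| + |V| - 4`, one less than the size.
-/

open Finset Matrix Submodule

namespace Matrix

variable {m n m₁ m₂ n₁ n₂ F : Type*} [Field F]

theorem det_eq_zero_of_rank_lt [Fintype n] [DecidableEq n] {R : Type*} [CommRing R] [IsDomain R]
    {A : Matrix n n R} (h : A.rank < Fintype.card n) : A.det = 0 := by
  by_contra hA
  exact h.ne (rank_of_det_ne_zero hA)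

theorem rank_add_le [Fintype n] (A B : Matrix m n F) : (A + B).rank ≤ A.rank + B.rank := by
  calc (A + B).rank = Module.finrank F (LinearMap.range (A.mulVecLin + B.mulVecLin)) := by
        rw [rank, mulVecLin_add]
    _ ≤ Module.finrank F
        (LinearMap.range A.mulVecLin ⊔ LinearMap.range B.mulVecLin : Submodule F (m → F)) :=
      Submodule.finrank_mono (LinearMap.range_add_le _ _)
    _ ≤ A.rank + B.rank := Submodule.finrank_add_le_finrank_add_finrank _ _

theorem rank_neg [Fintype n] {R : Type*} [CommRing R] (A : Matrix m n R) :
    (-A).rank = A.rank := by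
  have hneg : (-A).mulVecLin = -A.mulVecLin := LinearMap.ext fun v => neg_mulVec v A
  rw [rank, rank, hneg, LinearMap.range_neg]

theorem rank_le_card_add_rank_of_rows [Fintype m] [Fintype n] [DecidableEq m]
    (A : Matrix m n F) (s : Finset m) :
    A.rank ≤ #s + (of fun i j => if i ∈ s then 0 else A i j).rank := by
  have hsplit : A = (of fun i j => if i ∈ s then A i j else 0) +
      of fun i j => if i ∈ s then 0 else A i j := by
    ext i j
    by_cases hi : i ∈ s <;> simp [hi]
  have hs : (of fun i j => if i ∈ s then A i j else 0).rank ≤ #s :=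
    rank_le_card_of_support_subset _ _ <| Function.support_subset_iff'.2 fun i hi =>
      funext fun j => by simp [row, mem_coe.not.1 hi]
  conv_lhs => rw [hsplit]
  exact (rank_add_le _ _).trans (by gcongr)

theorem rank_le_card_add_rank_of_cols [Fintype m] [Fintype n] [DecidableEq n]
    (A : Matrix m n F) (t : Finset n) :
    A.rank ≤ #t + (of fun i j => if j ∈ t then 0 else A i j).rank :=
  calc A.rank = Aᵀ.rank := (rank_transpose A).symm
    _ ≤ #t + (of fun i j => if j ∈ t then 0 else A i j)ᵀ.rank :=
      rank_le_card_add_rank_of_rows Aᵀ t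
    _ = _ := by rw [rank_transpose]

theorem rank_fromBlocks_zero_zero_le [Fintype m₁] [Fintype m₂] [Fintype n₁] [Fintype n₂]
    (B : Matrix m₁ n₂ F) (C : Matrix m₂ n₁ F) :
    (fromBlocks 0 B C 0).rank ≤ B.rank + C.rank := by
  classical
  have hB : (fromBlocks 0 B 0 0 : Matrix (m₁ ⊕ m₂) (n₁ ⊕ n₂) F) =
      fromRows (1 : Matrix m₁ m₁ F) (0 : Matrix m₂ m₁ F) * B *
        fromCols (0 : Matrix n₂ n₁ F) 1 := by
    ext (i | i) (j | j) <;> simp [fromRows_mul]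
  have hC : (fromBlocks 0 0 C 0 : Matrix (m₁ ⊕ m₂) (n₁ ⊕ n₂) F) =
      fromRows (0 : Matrix m₁ m₂ F) (1 : Matrix m₂ m₂ F) * C *
        fromCols 1 (0 : Matrix n₁ n₂ F) := by
    ext (i | i) (j | j) <;> simp [fromRows_mul]
  calc (fromBlocks 0 B C 0).rank
      ≤ (fromBlocks 0 B 0 0 : Matrix (m₁ ⊕ m₂) (n₁ ⊕ n₂) F).rank +
          (fromBlocks 0 0 C 0 : Matrix (m₁ ⊕ m₂) (n₁ ⊕ n₂) F).rank := by
        simpa [fromBlocks_add] using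
          rank_add_le (fromBlocks 0 B 0 0 : Matrix (m₁ ⊕ m₂) (n₁ ⊕ n₂) F) (fromBlocks 0 0 C 0)
    _ ≤ B.rank + C.rank := by
      rw [hB, hC]
      exact add_le_add ((rank_mul_le_left _ _).trans (rank_mul_le_right _ _))
        ((rank_mul_le_left _ _).trans (rank_mul_le_right _ _))

theorem rank_fromBlocks_le [Fintype m₁] [Fintype m₂] [Fintype n₁] [Fintype n₂]
    [DecidableEq m₁] [DecidableEq n₁]
    (P : Matrix m₁ n₁ F) (Q : Matrix m₁ n₂ F) (R : Matrix m₂ n₁ F)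
    (s : Finset m₁) (t : Finset n₁) (hP : ∀ i ∉ s, ∀ j ∉ t, P i j = 0) :
    (fromBlocks P Q R 0).rank ≤ #s + #t + (of fun i j => if i ∈ s then 0 else Q i j).rank +
      (of fun i j => if j ∈ t then 0 else R i j).rank := by
  classical
  have hrest : (of fun i j => if j ∈ t.map .inl then 0 else
        (of fun i j => if i ∈ s.map .inl then 0 else fromBlocks P Q R 0 i j) i j) =
      fromBlocks 0 (of fun i j => if i ∈ s then 0 else Q i j)
        (of fun i j => if j ∈ t then 0 else R i j) 0 := by
    ext (i | i) (j | j) <;> simp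
    exact fun hj hi => hP i hi j hj
  calc (fromBlocks P Q R 0).rank ≤ #(s.map .inl) + _ := rank_le_card_add_rank_of_rows _ _
    _ ≤ #(s.map .inl) + (#(t.map .inl) + _) := by gcongr; exact rank_le_card_add_rank_of_cols _ _
    _ ≤ _ := by
      rw [hrest, card_map, card_map]
      have := rank_fromBlocks_zero_zero_le (of fun i j => if i ∈ s then 0 else Q i j)
        (of fun i j => if j ∈ t then 0 else R i j)
      omega

end Matrix

namespace Finset

theorem card_filter_orderIsoOfFin_compl_mem_add_card_le {α : Type*} [Fintype α] [LinearOrder α]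
    (I : Finset α) {n : ℕ} (h : #Iᶜ = n) {T : Finset α} (hIT : I ⊆ T) :
    #{a | (Iᶜ.orderIsoOfFin h a : α) ∈ T} + #I ≤ #T :=
  calc #{a | (Iᶜ.orderIsoOfFin h a : α) ∈ T} + #I ≤ #(T \ I) + #I := by
        gcongr
        exact card_le_card_of_injOn _
          (fun a ha => mem_sdiff.2 ⟨(mem_filter.1 ha).2, mem_compl.1 (Iᶜ.orderIsoOfFin h a).2⟩)
          fun _ _ _ _ hab => (Iᶜ.orderIsoOfFin h).injective (Subtype.ext hab)
    _ = #T := card_sdiff_add_card_eq_card hIT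

end Finset

namespace Multigraph

variable {E V : Type*} (G : Multigraph E V)

theorem map_inc [DecidableEq V] {R S : Type*} [Ring R] [Ring S] (f : R →+* S) (e : E) (v : V) :
    f (G.inc R e v) = G.inc S e v := by
  simp [inc, apply_ite f]

theorem inc_eq_single_sub_single [DecidableEq V] (R : Type*) [Ring R] (e : E) :
    G.inc R e = Pi.single (G.src e) 1 - Pi.single (G.tgt e) 1 := by
  ext v
  simp [inc, Pi.single_apply, eq_comm]

theorem finrank_span_inc_le [Fintype V] [DecidableEq V] (F : Type*) [Field F] (S : Finset V)
    (Es : Set E) (hend : ∀ e ∈ Es, G.src e ∈ S ∧ G.tgt e ∈ S) :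
    Module.finrank F (span F (G.inc F '' Es)) ≤ #S - 1 := by
  classical
  rcases S.eq_empty_or_nonempty with rfl | ⟨v1, hv1⟩
  · have hEs : G.inc F '' Es = ∅ :=
      Set.image_eq_empty.2 (Set.eq_empty_of_forall_notMem fun e he => by simpa using hend e he)
    simp [hEs]
  set δ : V → V → F := fun u => Pi.single u 1 - Pi.single v1 1
  have hδ : ∀ u ∈ S, δ u ∈ span F ((S.erase v1).image δ : Set (V → F)) := by
    intro u hu
    by_cases h : u = v1
    · simp [δ, h]
    · exact subset_span (mem_coe.2 (mem_image_of_mem δ (mem_erase.2 ⟨h, hu⟩)))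
  have hle : span F (G.inc F '' Es) ≤ span F ((S.erase v1).image δ : Set (V → F)) := by
    rw [span_le]
    rintro _ ⟨e, he, rfl⟩
    have hinc : G.inc F e = δ (G.src e) - δ (G.tgt e) := by
      simp [δ, inc_eq_single_sub_single]
    rw [SetLike.mem_coe, hinc]
    exact sub_mem (hδ _ (hend e he).1) (hδ _ (hend e he).2)
  calc Module.finrank F (span F (G.inc F '' Es))
      ≤ Module.finrank F (span F ((S.erase v1).image δ : Set (V → F))) := finrank_mono hle
    _ ≤ #((S.erase v1).image δ) := finrank_span_finset_le_card _
    _ ≤ #(S.erase v1) := card_image_le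
    _ = #S - 1 := card_erase_of_mem hv1

theorem rank_ite_inc_le [Fintype V] [DecidableEq E] [DecidableEq V] (F : Type*) [Field F]
    {α U : Type*} [Fintype α] [Fintype U] (ρ : α → E) (ι : U → V) (S : Finset V) (Es : Finset E)
    (hend : ∀ e ∉ Es, G.src e ∈ S ∧ G.tgt e ∈ S) :
    (of fun a u => if ρ a ∈ Es then 0 else G.inc F (ρ a) (ι u)).rank ≤ #S - 1 := by
  set W := (span F (G.inc F '' {e | e ∉ Es})).map (LinearMap.funLeft F F ι)
  have hrow : ∀ a, (of fun a u => if ρ a ∈ Es then 0 else G.inc F (ρ a) (ι u)) a ∈ W := by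
    intro a
    by_cases ha : ρ a ∈ Es
    · convert W.zero_mem using 1
      ext u
      simp [ha]
    · convert Submodule.mem_map_of_mem (f := LinearMap.funLeft F F ι)
        (subset_span (Set.mem_image_of_mem (G.inc F) (show ρ a ∈ {e | e ∉ Es} from ha))) using 1
      ext u
      simp [ha]
  calc _ = Module.finrank F (span F (Set.range (of fun a u =>
          if ρ a ∈ Es then 0 else G.inc F (ρ a) (ι u)).row)) := rank_eq_finrank_span_row _
    _ ≤ Module.finrank F W := finrank_mono (span_le.2 (Set.range_subset_iff.2 hrow))
    _ ≤ Module.finrank F (span F (G.inc F '' {e | e ∉ Es})) := finrank_map_le _ _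
    _ ≤ #S - 1 := G.finrank_span_inc_le F S _ hend

theorem rank_map_bigMatK_submatrix_le [Fintype E] [Fintype V] [DecidableEq E] [DecidableEq V]
    {F : Type*} [Field F] (f : MvPolynomial E ℚ →+* F) (v0 : V) (K : Finset E) {α β : Type*}
    [Fintype α] [Fintype β] (ρ : α → E) (γ : β → E) {S1 S2 : Finset V} {E1 E2 : Finset E}
    (hEcover : E1 ∪ E2 = univ) (hend1 : ∀ e ∈ E1, G.src e ∈ S1 ∧ G.tgt e ∈ S1)
    (hend2 : ∀ e ∈ E2, G.src e ∈ S2 ∧ G.tgt e ∈ S2) :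
    (((G.bigMatK v0 K).submatrix (Sum.map ρ id) (Sum.map γ id)).map f).rank ≤
      #{a | ρ a ∈ E1} + #{b | γ b ∈ E2} + (#S2 - 1) + (#S1 - 1) := by
  classical
  have hedge : ∀ e, e ∈ E1 ∨ e ∈ E2 := fun e => mem_union.1 (hEcover ▸ mem_univ e)
  have hblocks : ((G.bigMatK v0 K).submatrix (Sum.map ρ id) (Sum.map γ id)).map f =
      fromBlocks (of fun a b => f (G.bigMatK v0 K (.inl (ρ a)) (.inl (γ b))))
        (of fun a (w : {v // v ≠ v0}) => G.inc F (ρ a) w)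
        (of fun (v : {v // v ≠ v0}) b => -G.inc F (γ b) v) 0 := by
    ext (a | v) (b | w) <;> simp [bigMatK, map_inc]
  have hdiag : ∀ a ∉ ({a | ρ a ∈ E1} : Finset α), ∀ b ∉ ({b | γ b ∈ E2} : Finset β),
      f (G.bigMatK v0 K (.inl (ρ a)) (.inl (γ b))) = 0 := by
    intro a ha b hb
    have hne : ρ a ≠ γ b := by
      simp only [mem_filter, mem_univ, true_and] at ha hb
      rintro h
      exact (hedge (γ b)).elim (h ▸ ha) hb
    simp [bigMatK, hne]
  have hQ := G.rank_ite_inc_le F ρ (Subtype.val : {v // v ≠ v0} → V) S2 E1 fun e he =>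
    hend2 e ((hedge e).resolve_left he)
  have hR := G.rank_ite_inc_le F γ (Subtype.val : {v // v ≠ v0} → V) S1 E2 fun e he =>
    hend1 e ((hedge e).resolve_right he)
  rw [← rank_transpose, ← rank_neg] at hR
  rw [hblocks]
  refine (rank_fromBlocks_le _ _ _ _ _ hdiag).trans (add_le_add (add_le_add le_rfl ?_) ?_)
  · simpa using hQ
  · refine le_of_eq_of_le (congrArg rank ?_) hR
    ext v b
    by_cases hb : γ b ∈ E2 <;> simp [hb]

end Multigraph

theorem two_vertex_join_dodgson_vanishes_general {E V : Type*} [Fintype E] [LinearOrder E]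
    [Fintype V] [DecidableEq V] (G : Multigraph E V) (v0 : V)
    (S1 S2 : Finset V) (v1 v2 : V) (hv : v1 ≠ v2)
    (hcover : S1 ∪ S2 = Finset.univ) (hinter : S1 ∩ S2 = {v1, v2})
    (E1 E2 : Finset E) (hEcover : E1 ∪ E2 = Finset.univ) (hEdisj : Disjoint E1 E2)
    (hend1 : ∀ e ∈ E1, G.src e ∈ S1 ∧ G.tgt e ∈ S1)
    (hend2 : ∀ e ∈ E2, G.src e ∈ S2 ∧ G.tgt e ∈ S2)
    (i j k l : E) (hi : i ∈ E1) (hj : j ∈ E1) (hk : k ∈ E2) (hl : l ∈ E2)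
    (hij : i ≠ j) (hkl : k ≠ l) :
    G.dodgson v0 {i, j} {k, l} ∅ = 0 := by
  have hIJ : #{i, j} = #{k, l} := by rw [card_pair hij, card_pair hkl]
  rw [Multigraph.dodgson, dif_pos hIJ]
  apply IsFractionRing.injective (MvPolynomial E ℚ) (FractionRing (MvPolynomial E ℚ))
  rw [map_zero, RingHom.map_det, RingHom.mapMatrix_apply]
  apply det_eq_zero_of_rank_lt
  refine (G.rank_map_bigMatK_submatrix_le _ v0 ∅ _ _ hEcover hend1 hend2).trans_lt ?_
  have hρ := card_filter_orderIsoOfFin_compl_mem_add_card_le {i, j} rfl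
    (by simp [insert_subset_iff, hi, hj] : {i, j} ⊆ E1)
  have hγ := card_filter_orderIsoOfFin_compl_mem_add_card_le {k, l}
    (n := #({i, j}ᶜ : Finset E)) (by rw [card_compl, card_compl, hIJ])
    (by simp [insert_subset_iff, hk, hl] : {k, l} ⊆ E2)
  have hij2 := card_pair hij
  have hkl2 := card_pair hkl
  have hE : #E1 + #E2 = Fintype.card E := by
    rw [← card_union_of_disjoint hEdisj, hEcover, card_univ]
  have hS : #S1 + #S2 = Fintype.card V + 2 := by
    rw [← card_union_add_card_inter, hcover, hinter, card_univ, card_pair hv]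
  have hS1 := card_le_univ S1
  have hS2 := card_le_univ S2
  have hsize : Fintype.card (Fin #({i, j}ᶜ : Finset E) ⊕ {v // v ≠ v0}) =
      Fintype.card E - 2 + (Fintype.card V - 1) := by
    rw [Fintype.card_sum, Fintype.card_fin, card_compl, card_pair hij,
      Fintype.card_subtype_compl, Fintype.card_subtype_eq]
  omega

/-- If `G` is a two-vertex join of `G₁` (edges `E₁`, vertices `S₁`) and
`G₂` (edges `E₂`, vertices `S₂`, with `S₁ ∩ S₂ = {v₁, v₂}`), and the edges `i, j` lie in
`G₁` while `k, l` lie in `G₂`, then the Dodgson polynomial `Ψ^{ij,kl}_G` vanishes. -/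
theorem two_vertex_join_dodgson_vanishes {E V : Type*} [Fintype E] [LinearOrder E]
    [Fintype V] [DecidableEq V] (G : Multigraph E V) (hconn : G.Connected) (v0 : V)
    (S1 S2 : Finset V) (v1 v2 : V) (hv : v1 ≠ v2)
    (hcover : S1 ∪ S2 = Finset.univ) (hinter : S1 ∩ S2 = {v1, v2})
    (E1 E2 : Finset E) (hEcover : E1 ∪ E2 = Finset.univ) (hEdisj : Disjoint E1 E2)
    (hend1 : ∀ e ∈ E1, G.src e ∈ S1 ∧ G.tgt e ∈ S1)
    (hend2 : ∀ e ∈ E2, G.src e ∈ S2 ∧ G.tgt e ∈ S2)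
    (i j k l : E) (hi : i ∈ E1) (hj : j ∈ E1) (hk : k ∈ E2) (hl : l ∈ E2)
    (hij : i ≠ j) (hkl : k ≠ l) :
    G.dodgson v0 {i, j} {k, l} ∅ = 0 :=
  two_vertex_join_dodgson_vanishes_general G v0 S1 S2 v1 v2 hv hcover hinter E1 E2 hEcover hEdisj
    hend1 hend2 i j k l hi hj hk hl hij hkl
end

section
/- Three-vertex join decomposition of the graph polynomial: if G is obtained by gluing graphs G' and G'' along three vertices u, v, w (G' ∩ G'' = {u,v,w}), then Ψ_G = Φ'^{{u},{v},{w}} · Ψ_{G''} + Φ'^{{u},{v,w}} · Φ''^{{v},{u,w}} + Φ'^{{u},{v,w}} · Φ''^{{w},{u,v}} + Φ'^{{v},{u,w}} · Φ''^{{u},{v,w}} + Φ'^{{v},{u,w}} · Φ''^{{w},{u,v}} + Φ'^{{w},{u,v}} · Φ''^{{u},{v,w}} + Φ'^{{w},{u,v}} · Φ''^{{v},{u,w}} + Ψ_{G'} · Φ''^{{u},{v},{w}}, where Φ'^P, Φ''^P denote spanning forest polynomials of G', G'' respectively. -/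
/-!
A spanning tree `T` of the glued graph splits as `F₁ ⊔ F₂` with `Fᵢ ⊆ Eᵢ`. Since the two sides
meet only in `u, v, w`, every vertex of side `i` is joined by `Fᵢ` to one of them, so the trees
of `Fᵢ` induce a partition `Pᵢ` of `{u, v, w}` and `|Fᵢ| ≥ |Sᵢ| - |Pᵢ|`. As
`|F₁| + |F₂| = |V| - 1 = |S₁| + |S₂| - 4`, this gives `|P₁| + |P₂| ≥ 4`; connectivity of `T` says
that no terminal is a singleton block of both `P₁` and `P₂`. The pairs left are the eight of the
formula, all with `|P₁| + |P₂| = 4`, so both bounds are equalities and `Fᵢ` is a spanning forest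
of type `Pᵢ`; conversely each such pair of forests glues to a spanning tree.
-/

open Classical in
/-- Read `Aᵢ, Bᵢ, Cᵢ` as "`Fᵢ` joins `u, v`", "... `u, w`", "... `v, w`" on side `i`, `covᵢ` as
"every vertex of side `i` is joined to a terminal", `nᵢ = |Fᵢ|`, `sᵢ = |Sᵢ|`, `N = |V|`, and `J` as
"the terminals are connected after gluing". The bounds `sᵢ ≤ nᵢ + #(terminal classes)` must be
equalities when `n₁ + n₂ + 1 = N`, and then exactly one of the eight terms survives. -/
theorem ite_eq_sum_ite_of_terminal_patterns {M : Type*} [AddCommMonoid M] (m : M)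
    {n₁ n₂ s₁ s₂ N : ℕ} {A₁ B₁ C₁ A₂ B₂ C₂ cov₁ cov₂ J : Prop} (hs : s₁ + s₂ = N + 3)
    (hJ : J ↔ (A₁ ∨ B₁ ∨ A₂ ∨ B₂) ∧ (A₁ ∨ C₁ ∨ A₂ ∨ C₂) ∧ (B₁ ∨ C₁ ∨ B₂ ∨ C₂))
    (hpat₁ : A₁ ∧ B₁ ∧ C₁ ∨ A₁ ∧ ¬B₁ ∧ ¬C₁ ∨ ¬A₁ ∧ B₁ ∧ ¬C₁ ∨ ¬A₁ ∧ ¬B₁ ∧ C₁ ∨ ¬A₁ ∧ ¬B₁ ∧ ¬C₁)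
    (hpat₂ : A₂ ∧ B₂ ∧ C₂ ∨ A₂ ∧ ¬B₂ ∧ ¬C₂ ∨ ¬A₂ ∧ B₂ ∧ ¬C₂ ∨ ¬A₂ ∧ ¬B₂ ∧ C₂ ∨ ¬A₂ ∧ ¬B₂ ∧ ¬C₂)
    (h₁₃ : cov₁ → s₁ ≤ n₁ + 3) (h₁₂ : cov₁ → A₁ ∨ B₁ ∨ C₁ → s₁ ≤ n₁ + 2)
    (h₁₁ : cov₁ → A₁ → B₁ → s₁ ≤ n₁ + 1)
    (h₂₃ : cov₂ → s₂ ≤ n₂ + 3) (h₂₂ : cov₂ → A₂ ∨ B₂ ∨ C₂ → s₂ ≤ n₂ + 2)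
    (h₂₁ : cov₂ → A₂ → B₂ → s₂ ≤ n₂ + 1) :
    (if n₁ + n₂ + 1 = N ∧ cov₁ ∧ cov₂ ∧ J then m else 0) =
      (if (n₁ + 3 = s₁ ∧ ¬A₁ ∧ ¬B₁ ∧ ¬C₁ ∧ cov₁) ∧ n₂ + 1 = s₂ ∧ A₂ ∧ B₂ ∧ cov₂ then m else 0)
      + (if (n₁ + 2 = s₁ ∧ C₁ ∧ ¬A₁ ∧ ¬B₁ ∧ cov₁) ∧ n₂ + 2 = s₂ ∧ B₂ ∧ ¬A₂ ∧ ¬C₂ ∧ cov₂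
          then m else 0)
      + (if (n₁ + 2 = s₁ ∧ C₁ ∧ ¬A₁ ∧ ¬B₁ ∧ cov₁) ∧ n₂ + 2 = s₂ ∧ A₂ ∧ ¬B₂ ∧ ¬C₂ ∧ cov₂
          then m else 0)
      + (if (n₁ + 2 = s₁ ∧ B₁ ∧ ¬A₁ ∧ ¬C₁ ∧ cov₁) ∧ n₂ + 2 = s₂ ∧ C₂ ∧ ¬A₂ ∧ ¬B₂ ∧ cov₂
          then m else 0)
      + (if (n₁ + 2 = s₁ ∧ B₁ ∧ ¬A₁ ∧ ¬C₁ ∧ cov₁) ∧ n₂ + 2 = s₂ ∧ A₂ ∧ ¬B₂ ∧ ¬C₂ ∧ cov₂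
          then m else 0)
      + (if (n₁ + 2 = s₁ ∧ A₁ ∧ ¬B₁ ∧ ¬C₁ ∧ cov₁) ∧ n₂ + 2 = s₂ ∧ C₂ ∧ ¬A₂ ∧ ¬B₂ ∧ cov₂
          then m else 0)
      + (if (n₁ + 2 = s₁ ∧ A₁ ∧ ¬B₁ ∧ ¬C₁ ∧ cov₁) ∧ n₂ + 2 = s₂ ∧ B₂ ∧ ¬A₂ ∧ ¬C₂ ∧ cov₂
          then m else 0)
      + (if (n₁ + 1 = s₁ ∧ A₁ ∧ B₁ ∧ cov₁) ∧ n₂ + 3 = s₂ ∧ ¬A₂ ∧ ¬B₂ ∧ ¬C₂ ∧ cov₂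
          then m else 0) := by
  obtain rfl := propext hJ
  by_cases hc₁ : cov₁
  swap; · simp [hc₁]
  by_cases hc₂ : cov₂
  swap; · simp [hc₂]
  rcases hpat₁ with ⟨a₁, b₁, c₁⟩ | ⟨a₁, b₁, c₁⟩ | ⟨a₁, b₁, c₁⟩ | ⟨a₁, b₁, c₁⟩ | ⟨a₁, b₁, c₁⟩ <;>
  rcases hpat₂ with ⟨a₂, b₂, c₂⟩ | ⟨a₂, b₂, c₂⟩ | ⟨a₂, b₂, c₂⟩ | ⟨a₂, b₂, c₂⟩ | ⟨a₂, b₂, c₂⟩ <;>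
  simp only [*, and_true, not_true, not_false_eq_true, false_and, and_false, or_true, or_false,
    if_false, add_zero, zero_add, forall_const, false_implies] at h₁₃ h₁₂ h₁₁ h₂₃ h₂₂ h₂₁ ⊢ <;>
  split_ifs <;> first | rfl | simp | omega

theorem Finset.coe_mem_iff_of_inter_eq {V : Type*} [DecidableEq V] {S T : Finset V} {u v w : V}
    (h : S ∩ T = {u, v, w}) (hu : u ∈ S) (hv : v ∈ S) (hw : w ∈ S) (k : S) :
    ↑k ∈ T ↔ k = ⟨u, hu⟩ ∨ k = ⟨v, hv⟩ ∨ k = ⟨w, hw⟩ := by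
  simpa [Subtype.ext_iff, k.2] using Finset.ext_iff.1 h k

namespace Multigraph

section Reach

variable {E V : Type*} (G : Multigraph E V) {F : Finset E} {a b c : V}

theorem adj_comm : G.Adj F a b ↔ G.Adj F b a := by
  simp only [Adj, or_comm]

@[simp] theorem reach_refl : G.Reach F a a := .refl

theorem reach_symm (h : G.Reach F a b) : G.Reach F b a := by
  induction h with
  | refl => exact .refl
  | tail _ hadj ih => exact .head (G.adj_comm.1 hadj) ih

theorem reach_comm : G.Reach F a b ↔ G.Reach F b a := ⟨G.reach_symm, G.reach_symm⟩

theorem reach_of_adj (h : G.Adj F a b) : G.Reach F a b := .single h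

theorem eq_of_reach_empty (h : G.Reach ∅ a b) : a = b := by
  induction h with
  | refl => rfl
  | tail _ hadj => obtain ⟨e, he, -⟩ := hadj; simp at he

theorem mem_of_reach {X : Set V} (hX : ∀ x y, G.Adj F x y → x ∈ X → y ∈ X)
    (h : G.Reach F a b) (ha : a ∈ X) : b ∈ X := by
  induction h with
  | refl => exact ha
  | tail _ hadj ih => exact hX _ _ hadj ih

theorem reach_insert [DecidableEq E] {e : E} (h : G.Reach (insert e F) a b) :
    G.Reach F a b ∨ G.Reach F a (G.src e) ∨ G.Reach F a (G.tgt e) := by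
  induction h with
  | refl => exact Or.inl .refl
  | tail _ hadj ih =>
    obtain ⟨e', he', hends⟩ := hadj
    rcases Finset.mem_insert.mp he' with rfl | he'
    · rcases hends with ⟨hx, -⟩ | ⟨-, hx⟩ <;> subst hx <;> tauto
    · exact ih.imp_left fun h => h.tail ⟨e', he', hends⟩

theorem card_le_card_add_card [Fintype V] [DecidableEq V] [DecidableEq E] (F : Finset E)
    {K : Finset V} (hK : ∀ x, ∃ k ∈ K, G.Reach F x k) :
    Fintype.card V ≤ F.card + K.card := by
  induction F using Finset.induction_on generalizing K with
  | empty =>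
    have : Finset.univ ⊆ K := fun x _ => by
      obtain ⟨k, hk, hxk⟩ := hK x
      rwa [G.eq_of_reach_empty hxk]
    simpa using Finset.card_le_card this
  | @insert e F he ih =>
    -- Some endpoint `p` of `e` reaches `K` without `e`; adding the other endpoint `q` to `K`
    -- covers every vertex without `e`.
    obtain ⟨k₀, hk₀, hk₀e⟩ := hK (G.src e)
    obtain ⟨p, q, hpq, hp⟩ : ∃ p q, (p = G.src e ∧ q = G.tgt e ∨ p = G.tgt e ∧ q = G.src e) ∧
        G.Reach F p k₀ := by
      rcases G.reach_insert (G.reach_symm hk₀e) with h | h | h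
      · exact ⟨_, _, Or.inl ⟨rfl, rfl⟩, G.reach_symm h⟩
      · exact ⟨_, _, Or.inl ⟨rfl, rfl⟩, G.reach_symm h⟩
      · exact ⟨_, _, Or.inr ⟨rfl, rfl⟩, G.reach_symm h⟩
    have hcover : ∀ x, ∃ k ∈ insert q K, G.Reach F x k := by
      intro x
      obtain ⟨k, hk, hxk⟩ := hK x
      rcases hpq with ⟨rfl, rfl⟩ | ⟨rfl, rfl⟩ <;> rcases G.reach_insert hxk with h | h | h
      all_goals first
        | exact ⟨_, Finset.mem_insert_of_mem hk, h⟩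
        | exact ⟨_, Finset.mem_insert_of_mem hk₀, h.trans hp⟩
        | exact ⟨_, Finset.mem_insert_self _ _, h⟩
    have := ih hcover
    have := Finset.card_insert_le q K
    rw [Finset.card_insert_of_notMem he]
    omega

theorem reach_cases (a b c : V) :
    G.Reach F a b ∧ G.Reach F a c ∧ G.Reach F b c ∨
      G.Reach F a b ∧ ¬G.Reach F a c ∧ ¬G.Reach F b c ∨
      ¬G.Reach F a b ∧ G.Reach F a c ∧ ¬G.Reach F b c ∨
      ¬G.Reach F a b ∧ ¬G.Reach F a c ∧ G.Reach F b c ∨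
      ¬G.Reach F a b ∧ ¬G.Reach F a c ∧ ¬G.Reach F b c := by
  have : G.Reach F a b → G.Reach F a c → G.Reach F b c := fun h h' => (G.reach_symm h).trans h'
  have : G.Reach F a b → G.Reach F b c → G.Reach F a c := fun h h' => h.trans h'
  have : G.Reach F a c → G.Reach F b c → G.Reach F a b := fun h h' => h.trans (G.reach_symm h')
  tauto

end Reach

section Terminals

variable {E V : Type*} (G : Multigraph E V) {F : Finset E} {a b c : V} [Fintype V]

theorem isSpanningTree_iff_of_three :
    G.IsSpanningTree F ↔ F.card + 1 = Fintype.card V ∧ G.Reach F a b ∧ G.Reach F a c ∧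
      ∀ x, G.Reach F x a ∨ G.Reach F x b ∨ G.Reach F x c := by
  refine ⟨fun ⟨hconn, hcard⟩ => ⟨hcard, hconn a b, hconn a c, fun x => Or.inl (hconn x a)⟩, ?_⟩
  rintro ⟨hcard, hab, hac, hcov⟩
  have hxa : ∀ x, G.Reach F x a := fun x => by
    rcases hcov x with h | h | h
    exacts [h, h.trans (G.reach_symm hab), h.trans (G.reach_symm hac)]
  exact ⟨fun x y => (hxa x).trans (G.reach_symm (hxa y)), hcard⟩

variable [DecidableEq V]

theorem isSpanningForest_pair_iff (hab : a ≠ b) :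
    G.IsSpanningForest {{a}, {b, c}} F ↔ F.card + 2 = Fintype.card V ∧
      G.Reach F b c ∧ ¬G.Reach F a b ∧ ¬G.Reach F a c ∧
      ∀ x, G.Reach F x a ∨ G.Reach F x b ∨ G.Reach F x c := by
  have hne : ({a} : Finset V) ≠ {b, c} := fun h =>
    hab (Finset.mem_singleton.1 (h ▸ Finset.mem_insert_self b {c})).symm
  simp [IsSpanningForest, hne, hne.symm, Finset.card_pair hne, G.reach_comm (a := b) (b := a),
    G.reach_comm (a := c) (b := a), G.reach_comm (a := c) (b := b)]
  tauto

theorem isSpanningForest_pair_iff_mid (hab : a ≠ b) :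
    G.IsSpanningForest {{b}, {a, c}} F ↔ F.card + 2 = Fintype.card V ∧
      G.Reach F a c ∧ ¬G.Reach F a b ∧ ¬G.Reach F b c ∧
      ∀ x, G.Reach F x a ∨ G.Reach F x b ∨ G.Reach F x c := by
  rw [isSpanningForest_pair_iff _ hab.symm, G.reach_comm (a := b) (b := a)]
  simp only [or_left_comm]

theorem isSpanningForest_pair_iff_last (hac : a ≠ c) :
    G.IsSpanningForest {{c}, {a, b}} F ↔ F.card + 2 = Fintype.card V ∧
      G.Reach F a b ∧ ¬G.Reach F a c ∧ ¬G.Reach F b c ∧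
      ∀ x, G.Reach F x a ∨ G.Reach F x b ∨ G.Reach F x c := by
  rw [isSpanningForest_pair_iff _ hac.symm, G.reach_comm (a := c) (b := a),
    G.reach_comm (a := c) (b := b)]
  simp only [or_comm (a := G.Reach F _ c), or_assoc]

theorem isSpanningForest_singletons_iff (hab : a ≠ b) (hac : a ≠ c) (hbc : b ≠ c) :
    G.IsSpanningForest {{a}, {b}, {c}} F ↔ F.card + 3 = Fintype.card V ∧
      ¬G.Reach F a b ∧ ¬G.Reach F a c ∧ ¬G.Reach F b c ∧
      ∀ x, G.Reach F x a ∨ G.Reach F x b ∨ G.Reach F x c := by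
  simp [IsSpanningForest, hab, hac, hbc, hab.symm, hac.symm, hbc.symm,
    G.reach_comm (a := b) (b := a), G.reach_comm (a := c) (b := a),
    G.reach_comm (a := c) (b := b), Finset.card_insert_of_notMem]
  tauto

variable [DecidableEq E]

theorem card_le_add_three (hcov : ∀ x, G.Reach F x a ∨ G.Reach F x b ∨ G.Reach F x c) :
    Fintype.card V ≤ F.card + 3 :=
  (G.card_le_card_add_card F (K := {a, b, c}) (by simpa using hcov)).trans
    (Nat.add_le_add_left Finset.card_le_three _)

theorem card_le_add_two (hcov : ∀ x, G.Reach F x a ∨ G.Reach F x b ∨ G.Reach F x c)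
    (h : G.Reach F a b ∨ G.Reach F a c ∨ G.Reach F b c) :
    Fintype.card V ≤ F.card + 2 := by
  obtain ⟨p, q, hpq⟩ : ∃ p q, ∀ x, G.Reach F x p ∨ G.Reach F x q := by
    rcases h with h | h | h
    · refine ⟨a, c, fun x => ?_⟩
      have : G.Reach F x b → G.Reach F x a := (·.trans (G.reach_symm h))
      have := hcov x
      tauto
    · refine ⟨a, b, fun x => ?_⟩
      have : G.Reach F x c → G.Reach F x a := (·.trans (G.reach_symm h))
      have := hcov x
      tauto
    · refine ⟨a, b, fun x => ?_⟩
      have : G.Reach F x c → G.Reach F x b := (·.trans (G.reach_symm h))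
      have := hcov x
      tauto
  exact (G.card_le_card_add_card F (K := {p, q}) (by simpa using hpq)).trans
    (Nat.add_le_add_left Finset.card_le_two _)

theorem card_le_add_one (hcov : ∀ x, G.Reach F x a ∨ G.Reach F x b ∨ G.Reach F x c)
    (hab : G.Reach F a b) (hac : G.Reach F a c) :
    Fintype.card V ≤ F.card + 1 := by
  refine G.card_le_card_add_card F (K := {a}) fun x => ⟨a, Finset.mem_singleton_self a, ?_⟩
  rcases hcov x with h | h | h
  exacts [h, h.trans (G.reach_symm hab), h.trans (G.reach_symm hac)]

end Terminals

section Glue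

variable {V E₁ E₂ : Type*} {S₁ S₂ : Finset V}

def glue (G₁ : Multigraph E₁ S₁) (G₂ : Multigraph E₂ S₂) : Multigraph (E₁ ⊕ E₂) V where
  src := Sum.elim (fun e => G₁.src e) (fun e => G₂.src e)
  tgt := Sum.elim (fun e => G₁.tgt e) (fun e => G₂.tgt e)

variable {G₁ : Multigraph E₁ S₁} {G₂ : Multigraph E₂ S₂} {F₁ : Finset E₁} {F₂ : Finset E₂}

theorem adj_glue {x y : V} (h : (G₁.glue G₂).Adj (F₁.disjSum F₂) x y) :
    (∃ a b : S₁, G₁.Adj F₁ a b ∧ ↑a = x ∧ ↑b = y) ∨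
      ∃ a b : S₂, G₂.Adj F₂ a b ∧ ↑a = x ∧ ↑b = y := by
  obtain ⟨e | e, he, hends⟩ := h <;>
    simp only [Finset.inl_mem_disjSum, Finset.inr_mem_disjSum] at he
  · left
    rcases hends with ⟨rfl, rfl⟩ | ⟨rfl, rfl⟩
    · exact ⟨_, _, ⟨e, he, Or.inl ⟨rfl, rfl⟩⟩, rfl, rfl⟩
    · exact ⟨_, _, ⟨e, he, Or.inr ⟨rfl, rfl⟩⟩, rfl, rfl⟩
  · right
    rcases hends with ⟨rfl, rfl⟩ | ⟨rfl, rfl⟩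
    · exact ⟨_, _, ⟨e, he, Or.inl ⟨rfl, rfl⟩⟩, rfl, rfl⟩
    · exact ⟨_, _, ⟨e, he, Or.inr ⟨rfl, rfl⟩⟩, rfl, rfl⟩

theorem reach_glue_inl {a b : S₁} (h : G₁.Reach F₁ a b) :
    (G₁.glue G₂).Reach (F₁.disjSum F₂) a b := by
  refine Relation.ReflTransGen.lift (p := (G₁.glue G₂).Adj (F₁.disjSum F₂)) Subtype.val
    (fun x y hxy => ?_) a b h
  obtain ⟨e, he, hends⟩ := hxy
  refine ⟨.inl e, Finset.inl_mem_disjSum.2 he, ?_⟩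
  rcases hends with ⟨rfl, rfl⟩ | ⟨rfl, rfl⟩
  exacts [Or.inl ⟨rfl, rfl⟩, Or.inr ⟨rfl, rfl⟩]

theorem reach_glue_inr {a b : S₂} (h : G₂.Reach F₂ a b) :
    (G₁.glue G₂).Reach (F₁.disjSum F₂) a b := by
  refine Relation.ReflTransGen.lift (p := (G₁.glue G₂).Adj (F₁.disjSum F₂)) Subtype.val
    (fun x y hxy => ?_) a b h
  obtain ⟨e, he, hends⟩ := hxy
  refine ⟨.inr e, Finset.inr_mem_disjSum.2 he, ?_⟩
  rcases hends with ⟨rfl, rfl⟩ | ⟨rfl, rfl⟩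
  exacts [Or.inl ⟨rfl, rfl⟩, Or.inr ⟨rfl, rfl⟩]

theorem glue_reach_closed {P₁ : S₁ → Prop} {P₂ : S₂ → Prop}
    (h₁ : ∀ a b, G₁.Adj F₁ a b → P₁ a → P₁ b) (h₂ : ∀ a b, G₂.Adj F₂ a b → P₂ a → P₂ b)
    (hP : ∀ x (hx₁ : x ∈ S₁) (hx₂ : x ∈ S₂), P₁ ⟨x, hx₁⟩ ↔ P₂ ⟨x, hx₂⟩) {x y : V}
    (hxy : (G₁.glue G₂).Reach (F₁.disjSum F₂) x y) (hx : (∃ h, P₁ ⟨x, h⟩) ∨ ∃ h, P₂ ⟨x, h⟩) :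
    (∃ h, P₁ ⟨y, h⟩) ∨ ∃ h, P₂ ⟨y, h⟩ := by
  refine (G₁.glue G₂).mem_of_reach (X := {x | (∃ h, P₁ ⟨x, h⟩) ∨ ∃ h, P₂ ⟨x, h⟩}) ?_ hxy hx
  rintro _ _ hadj (⟨hx₁, hx⟩ | ⟨hx₂, hx⟩) <;>
    rcases adj_glue hadj with ⟨a, b, hab, rfl, rfl⟩ | ⟨a, b, hab, rfl, rfl⟩
  · exact Or.inl ⟨b.2, h₁ a b hab hx⟩
  · exact Or.inr ⟨b.2, h₂ a b hab ((hP a hx₁ a.2).1 hx)⟩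
  · exact Or.inl ⟨b.2, h₁ a b hab ((hP a a.2 hx₂).2 hx)⟩
  · exact Or.inr ⟨b.2, h₂ a b hab hx⟩

theorem exists_reach_inter_left {a : S₁} {y : V} (hy : y ∈ S₂)
    (h : (G₁.glue G₂).Reach (F₁.disjSum F₂) a y) : ∃ k : S₁, ↑k ∈ S₂ ∧ G₁.Reach F₁ a k := by
  by_contra! ha
  obtain ⟨hy₁, hy'⟩ | ⟨-, ⟨⟩⟩ := glue_reach_closed
    (P₁ := fun b => ∀ k : S₁, ↑k ∈ S₂ → ¬G₁.Reach F₁ b k) (P₂ := fun _ => False)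
    (fun a b hab hb k hk hbk => hb k hk ((G₁.reach_of_adj hab).trans hbk)) (fun _ _ _ => id)
    (fun x hx₁ hx₂ => iff_false_intro fun hx => hx ⟨x, hx₁⟩ hx₂ .refl) h (Or.inl ⟨a.2, ha⟩)
  exact hy' ⟨y, hy₁⟩ hy .refl

theorem exists_reach_inter_right {a : S₂} {y : V} (hy : y ∈ S₁)
    (h : (G₁.glue G₂).Reach (F₁.disjSum F₂) a y) : ∃ k : S₂, ↑k ∈ S₁ ∧ G₂.Reach F₂ a k := by
  by_contra! ha
  obtain ⟨-, ⟨⟩⟩ | ⟨hy₂, hy'⟩ := glue_reach_closed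
    (P₁ := fun _ => False) (P₂ := fun b => ∀ k : S₂, ↑k ∈ S₁ → ¬G₂.Reach F₂ b k)
    (fun _ _ _ => id) (fun a b hab hb k hk hbk => hb k hk ((G₂.reach_of_adj hab).trans hbk))
    (fun x hx₁ hx₂ => (iff_false_intro fun hx => hx ⟨x, hx₂⟩ hx₁ .refl).symm) h (Or.inr ⟨a.2, ha⟩)
  exact hy' ⟨y, hy₂⟩ hy .refl

theorem eq_of_reach_glue {t x : V} (ht₁ : t ∈ S₁) (ht₂ : t ∈ S₂)
    (h₁ : ∀ k : S₁, ↑k ∈ S₂ → G₁.Reach F₁ k ⟨t, ht₁⟩ → ↑k = t)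
    (h₂ : ∀ k : S₂, ↑k ∈ S₁ → G₂.Reach F₂ k ⟨t, ht₂⟩ → ↑k = t) (hx₁ : x ∈ S₁) (hx₂ : x ∈ S₂)
    (h : (G₁.glue G₂).Reach (F₁.disjSum F₂) t x) : x = t := by
  have hP : ∀ y (hy₁ : y ∈ S₁) (hy₂ : y ∈ S₂),
      G₁.Reach F₁ ⟨y, hy₁⟩ ⟨t, ht₁⟩ ↔ G₂.Reach F₂ ⟨y, hy₂⟩ ⟨t, ht₂⟩ := fun y hy₁ hy₂ =>
    ⟨fun hy => by obtain rfl := h₁ _ hy₂ hy; exact .refl,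
      fun hy => by obtain rfl := h₂ _ hy₁ hy; exact .refl⟩
  obtain ⟨hx₁', hx⟩ | ⟨hx₂', hx⟩ := glue_reach_closed
    (fun a b hab ha => (G₁.reach_symm (G₁.reach_of_adj hab)).trans ha)
    (fun a b hab ha => (G₂.reach_symm (G₂.reach_of_adj hab)).trans ha) hP h (Or.inl ⟨ht₁, .refl⟩)
  exacts [h₁ ⟨x, hx₁'⟩ hx₂ hx, h₂ ⟨x, hx₂'⟩ hx₁ hx]

variable [DecidableEq V] {u v w : V} (hu₁ : u ∈ S₁) (hu₂ : u ∈ S₂) (hv₁ : v ∈ S₁) (hv₂ : v ∈ S₂)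
  (hw₁ : w ∈ S₁) (hw₂ : w ∈ S₂)

theorem reach_glue_terminals_iff (huv : u ≠ v) (huw : u ≠ w)
    (hinter : S₁ ∩ S₂ = {u, v, w}) :
    (G₁.glue G₂).Reach (F₁.disjSum F₂) u v ∧ (G₁.glue G₂).Reach (F₁.disjSum F₂) u w ↔
      (G₁.Reach F₁ ⟨u, hu₁⟩ ⟨v, hv₁⟩ ∨ G₁.Reach F₁ ⟨u, hu₁⟩ ⟨w, hw₁⟩ ∨
        G₂.Reach F₂ ⟨u, hu₂⟩ ⟨v, hv₂⟩ ∨ G₂.Reach F₂ ⟨u, hu₂⟩ ⟨w, hw₂⟩) ∧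
      (G₁.Reach F₁ ⟨u, hu₁⟩ ⟨v, hv₁⟩ ∨ G₁.Reach F₁ ⟨v, hv₁⟩ ⟨w, hw₁⟩ ∨
        G₂.Reach F₂ ⟨u, hu₂⟩ ⟨v, hv₂⟩ ∨ G₂.Reach F₂ ⟨v, hv₂⟩ ⟨w, hw₂⟩) ∧
      (G₁.Reach F₁ ⟨u, hu₁⟩ ⟨w, hw₁⟩ ∨ G₁.Reach F₁ ⟨v, hv₁⟩ ⟨w, hw₁⟩ ∨
        G₂.Reach F₂ ⟨u, hu₂⟩ ⟨w, hw₂⟩ ∨ G₂.Reach F₂ ⟨v, hv₂⟩ ⟨w, hw₂⟩) := by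
  have hbd₁ := Finset.coe_mem_iff_of_inter_eq hinter hu₁ hv₁ hw₁
  have hbd₂ := Finset.coe_mem_iff_of_inter_eq (Finset.inter_comm S₁ S₂ ▸ hinter) hu₂ hv₂ hw₂
  constructor
  · -- a terminal joined to no other terminal on either side stays isolated after gluing
    rintro ⟨huv', huw'⟩
    refine ⟨Classical.byContradiction fun h =>
        huv (eq_of_reach_glue hu₁ hu₂ ?_ ?_ hv₁ hv₂ huv').symm,
      Classical.byContradiction fun h =>
        huv (eq_of_reach_glue hv₁ hv₂ ?_ ?_ hu₁ hu₂ ((G₁.glue G₂).reach_symm huv')),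
      Classical.byContradiction fun h =>
        huw (eq_of_reach_glue hw₁ hw₂ ?_ ?_ hu₁ hu₂ ((G₁.glue G₂).reach_symm huw'))⟩
    all_goals
      intro k hk hkt
      first
        | rcases (hbd₁ k).1 hk with rfl | rfl | rfl <;>
            first | rfl | exact absurd hkt (by tauto) | exact absurd (G₁.reach_symm hkt) (by tauto)
        | rcases (hbd₂ k).1 hk with rfl | rfl | rfl <;>
            first | rfl | exact absurd hkt (by tauto) | exact absurd (G₂.reach_symm hkt) (by tauto)
  · rintro ⟨j₁, j₂, j₃⟩
    have e₁ : (G₁.glue G₂).Reach (F₁.disjSum F₂) u v ∨ (G₁.glue G₂).Reach (F₁.disjSum F₂) u w := by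
      rcases j₁ with h | h | h | h
      exacts [Or.inl (reach_glue_inl h), Or.inr (reach_glue_inl h), Or.inl (reach_glue_inr h),
        Or.inr (reach_glue_inr h)]
    have e₂ : (G₁.glue G₂).Reach (F₁.disjSum F₂) u v ∨ (G₁.glue G₂).Reach (F₁.disjSum F₂) v w := by
      rcases j₂ with h | h | h | h
      exacts [Or.inl (reach_glue_inl h), Or.inr (reach_glue_inl h), Or.inl (reach_glue_inr h),
        Or.inr (reach_glue_inr h)]
    have e₃ : (G₁.glue G₂).Reach (F₁.disjSum F₂) u w ∨ (G₁.glue G₂).Reach (F₁.disjSum F₂) v w := by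
      rcases j₃ with h | h | h | h
      exacts [Or.inl (reach_glue_inl h), Or.inr (reach_glue_inl h), Or.inl (reach_glue_inr h),
        Or.inr (reach_glue_inr h)]
    rcases e₁ with huv' | huw'
    · rcases e₃ with huw' | hvw'
      exacts [⟨huv', huw'⟩, ⟨huv', huv'.trans hvw'⟩]
    · rcases e₂ with huv' | hvw'
      exacts [⟨huv', huw'⟩, ⟨huw'.trans ((G₁.glue G₂).reach_symm hvw'), huw'⟩]

variable [Fintype V]

theorem isSpanningTree_glue_iff (hcover : S₁ ∪ S₂ = Finset.univ) {x₀ : V} (hx₀ : x₀ ∈ S₁ ∩ S₂) :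
    (G₁.glue G₂).IsSpanningTree (F₁.disjSum F₂) ↔
      F₁.card + F₂.card + 1 = Fintype.card V ∧
      (∀ a : S₁, ∃ k : S₁, ↑k ∈ S₂ ∧ G₁.Reach F₁ a k) ∧
      (∀ a : S₂, ∃ k : S₂, ↑k ∈ S₁ ∧ G₂.Reach F₂ a k) ∧
      ∀ x ∈ S₁ ∩ S₂, (G₁.glue G₂).Reach (F₁.disjSum F₂) x₀ x := by
  obtain ⟨hx₀₁, hx₀₂⟩ := Finset.mem_inter.1 hx₀
  rw [IsSpanningTree, Finset.card_disjSum, and_comm]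
  refine and_congr_right fun _ => ⟨fun hconn => ?_, fun ⟨hcov₁, hcov₂, hbd⟩ => ?_⟩
  · exact ⟨fun a => exists_reach_inter_left hx₀₂ (hconn a x₀),
      fun a => exists_reach_inter_right hx₀₁ (hconn a x₀), fun x _ => hconn x₀ x⟩
  · suffices h : ∀ x, (G₁.glue G₂).Reach (F₁.disjSum F₂) x x₀ from
      fun x y => (h x).trans ((G₁.glue G₂).reach_symm (h y))
    intro x
    rcases Finset.mem_union.1 (hcover ▸ Finset.mem_univ x) with hx | hx
    · obtain ⟨k, hk, hxk⟩ := hcov₁ ⟨x, hx⟩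
      exact (reach_glue_inl hxk).trans
        ((G₁.glue G₂).reach_symm (hbd _ (Finset.mem_inter.2 ⟨k.2, hk⟩)))
    · obtain ⟨k, hk, hxk⟩ := hcov₂ ⟨x, hx⟩
      exact (reach_glue_inr hxk).trans
        ((G₁.glue G₂).reach_symm (hbd _ (Finset.mem_inter.2 ⟨hk, k.2⟩)))

open Classical in
theorem ite_isSpanningTree_glue {M : Type*} [AddCommMonoid M] (m : M)
    (huv : u ≠ v) (huw : u ≠ w) (hvw : v ≠ w)
    (hcover : S₁ ∪ S₂ = Finset.univ) (hinter : S₁ ∩ S₂ = {u, v, w}) :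
    (if (G₁.glue G₂).IsSpanningTree (F₁.disjSum F₂) then m else 0) =
      (if G₁.IsSpanningForest {({⟨u, hu₁⟩} : Finset S₁), {⟨v, hv₁⟩}, {⟨w, hw₁⟩}} F₁ ∧
          G₂.IsSpanningTree F₂ then m else 0)
      + (if G₁.IsSpanningForest {({⟨u, hu₁⟩} : Finset S₁), {⟨v, hv₁⟩, ⟨w, hw₁⟩}} F₁ ∧
          G₂.IsSpanningForest {({⟨v, hv₂⟩} : Finset S₂), {⟨u, hu₂⟩, ⟨w, hw₂⟩}} F₂ then m else 0)
      + (if G₁.IsSpanningForest {({⟨u, hu₁⟩} : Finset S₁), {⟨v, hv₁⟩, ⟨w, hw₁⟩}} F₁ ∧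
          G₂.IsSpanningForest {({⟨w, hw₂⟩} : Finset S₂), {⟨u, hu₂⟩, ⟨v, hv₂⟩}} F₂ then m else 0)
      + (if G₁.IsSpanningForest {({⟨v, hv₁⟩} : Finset S₁), {⟨u, hu₁⟩, ⟨w, hw₁⟩}} F₁ ∧
          G₂.IsSpanningForest {({⟨u, hu₂⟩} : Finset S₂), {⟨v, hv₂⟩, ⟨w, hw₂⟩}} F₂ then m else 0)
      + (if G₁.IsSpanningForest {({⟨v, hv₁⟩} : Finset S₁), {⟨u, hu₁⟩, ⟨w, hw₁⟩}} F₁ ∧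
          G₂.IsSpanningForest {({⟨w, hw₂⟩} : Finset S₂), {⟨u, hu₂⟩, ⟨v, hv₂⟩}} F₂ then m else 0)
      + (if G₁.IsSpanningForest {({⟨w, hw₁⟩} : Finset S₁), {⟨u, hu₁⟩, ⟨v, hv₁⟩}} F₁ ∧
          G₂.IsSpanningForest {({⟨u, hu₂⟩} : Finset S₂), {⟨v, hv₂⟩, ⟨w, hw₂⟩}} F₂ then m else 0)
      + (if G₁.IsSpanningForest {({⟨w, hw₁⟩} : Finset S₁), {⟨u, hu₁⟩, ⟨v, hv₁⟩}} F₁ ∧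
          G₂.IsSpanningForest {({⟨v, hv₂⟩} : Finset S₂), {⟨u, hu₂⟩, ⟨w, hw₂⟩}} F₂ then m else 0)
      + (if G₁.IsSpanningTree F₁ ∧
          G₂.IsSpanningForest {({⟨u, hu₂⟩} : Finset S₂), {⟨v, hv₂⟩}, {⟨w, hw₂⟩}} F₂
          then m else 0) := by
  set U₁ : S₁ := ⟨u, hu₁⟩
  set V₁ : S₁ := ⟨v, hv₁⟩
  set W₁ : S₁ := ⟨w, hw₁⟩
  set U₂ : S₂ := ⟨u, hu₂⟩
  set V₂ : S₂ := ⟨v, hv₂⟩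
  set W₂ : S₂ := ⟨w, hw₂⟩
  have hbd₁ := Finset.coe_mem_iff_of_inter_eq hinter hu₁ hv₁ hw₁
  have hbd₂ := Finset.coe_mem_iff_of_inter_eq (Finset.inter_comm S₁ S₂ ▸ hinter) hu₂ hv₂ hw₂
  have hU₁V₁ : U₁ ≠ V₁ := fun h => huv (congrArg Subtype.val h)
  have hU₁W₁ : U₁ ≠ W₁ := fun h => huw (congrArg Subtype.val h)
  have hV₁W₁ : V₁ ≠ W₁ := fun h => hvw (congrArg Subtype.val h)
  have hU₂V₂ : U₂ ≠ V₂ := fun h => huv (congrArg Subtype.val h)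
  have hU₂W₂ : U₂ ≠ W₂ := fun h => huw (congrArg Subtype.val h)
  have hV₂W₂ : V₂ ≠ W₂ := fun h => hvw (congrArg Subtype.val h)
  rw [isSpanningTree_glue_iff hcover (hinter ▸ Finset.mem_insert_self u _)]
  simp only [hbd₁, hbd₂, or_and_right, exists_or, exists_eq_left, hinter, Finset.mem_insert,
    Finset.mem_singleton, forall_eq_or_imp, forall_eq, reach_refl, true_and]
  rw [G₁.isSpanningTree_iff_of_three (a := U₁) (b := V₁) (c := W₁),
    G₂.isSpanningTree_iff_of_three (a := U₂) (b := V₂) (c := W₂),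
    G₁.isSpanningForest_singletons_iff hU₁V₁ hU₁W₁ hV₁W₁,
    G₂.isSpanningForest_singletons_iff hU₂V₂ hU₂W₂ hV₂W₂,
    G₁.isSpanningForest_pair_iff hU₁V₁, G₂.isSpanningForest_pair_iff hU₂V₂,
    G₁.isSpanningForest_pair_iff_mid hU₁V₁, G₂.isSpanningForest_pair_iff_mid hU₂V₂,
    G₁.isSpanningForest_pair_iff_last hU₁W₁, G₂.isSpanningForest_pair_iff_last hU₂W₂]
  have hs : Fintype.card S₁ + Fintype.card S₂ = Fintype.card V + 3 := by
    have := Finset.card_union_add_card_inter S₁ S₂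
    rw [hcover, hinter, Finset.card_univ,
      Finset.card_eq_three.2 ⟨u, v, w, huv, huw, hvw, rfl⟩] at this
    simpa using this.symm
  -- `convert` only has to match the classical `Decidable` instances of the `if`s
  convert ite_eq_sum_ite_of_terminal_patterns m hs
    (reach_glue_terminals_iff hu₁ hu₂ hv₁ hv₂ hw₁ hw₂ huv huw hinter)
    (G₁.reach_cases U₁ V₁ W₁) (G₂.reach_cases U₂ V₂ W₂)
    G₁.card_le_add_three G₁.card_le_add_two G₁.card_le_add_one
    G₂.card_le_add_three G₂.card_le_add_two G₂.card_le_add_one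

end Glue

end Multigraph

section Polynomial

open MvPolynomial

variable {α β : Type*} [Fintype α] [Fintype β]

theorem Fintype.sum_finset_sum_eq_sum_disjSum {M : Type*} [AddCommMonoid M]
    (f : Finset (α ⊕ β) → M) : ∑ u, f u = ∑ s : Finset α, ∑ t : Finset β, f (s.disjSum t) := by
  rw [← Fintype.sum_prod_type']
  exact Fintype.sum_equiv Finset.sumEquiv.toEquiv f (fun p => f (p.1.disjSum p.2)) fun u => by
    simp [Finset.toLeft_disjSum_toRight]

variable [DecidableEq α] [DecidableEq β]

theorem Finset.compl_disjSum (s : Finset α) (t : Finset β) : (s.disjSum t)ᶜ = sᶜ.disjSum tᶜ := by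
  ext (x | x) <;> simp

open Classical in
theorem rename_sum_ite_mul_rename_sum_ite {R : Type*} [CommSemiring R]
    (p : Finset α → Prop) (q : Finset β → Prop) :
    rename Sum.inl (∑ s, if p s then ∏ e ∈ sᶜ, (X e : MvPolynomial α R) else 0) *
        rename Sum.inr (∑ t, if q t then ∏ e ∈ tᶜ, (X e : MvPolynomial β R) else 0) =
      ∑ s, ∑ t, if p s ∧ q t then ∏ e ∈ (s.disjSum t)ᶜ, (X e : MvPolynomial (α ⊕ β) R) else 0 := by
  simp only [map_sum, Finset.sum_mul_sum]
  refine Finset.sum_congr rfl fun s _ => Finset.sum_congr rfl fun t _ => ?_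
  rw [Finset.compl_disjSum, Finset.prod_disjSum]
  split_ifs <;> simp_all [map_prod]

end Polynomial

open MvPolynomial in
theorem three_vertex_join_kirchhoff_general {E1 E2 V : Type*} [Fintype E1] [DecidableEq E1]
    [Fintype E2] [DecidableEq E2] [Fintype V] [DecidableEq V]
    (S1 S2 : Finset V) (u v w : V) (huv : u ≠ v) (huw : u ≠ w) (hvw : v ≠ w)
    (hcover : S1 ∪ S2 = Finset.univ) (hinter : S1 ∩ S2 = {u, v, w})
    (hu1 : u ∈ S1) (hu2 : u ∈ S2) (hv1 : v ∈ S1) (hv2 : v ∈ S2)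
    (hw1 : w ∈ S1) (hw2 : w ∈ S2)
    (G1 : Multigraph E1 ↥S1) (G2 : Multigraph E2 ↥S2) (G : Multigraph (E1 ⊕ E2) V)
    (hsrc1 : ∀ e, G.src (Sum.inl e) = ↑(G1.src e))
    (htgt1 : ∀ e, G.tgt (Sum.inl e) = ↑(G1.tgt e))
    (hsrc2 : ∀ e, G.src (Sum.inr e) = ↑(G2.src e))
    (htgt2 : ∀ e, G.tgt (Sum.inr e) = ↑(G2.tgt e)) :
    G.kirchhoff
      = rename Sum.inl (G1.forestPoly {({⟨u, hu1⟩} : Finset ↥S1), {⟨v, hv1⟩}, {⟨w, hw1⟩}})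
          * rename Sum.inr G2.kirchhoff
        + rename Sum.inl (G1.forestPoly {({⟨u, hu1⟩} : Finset ↥S1), {⟨v, hv1⟩, ⟨w, hw1⟩}})
          * rename Sum.inr (G2.forestPoly {({⟨v, hv2⟩} : Finset ↥S2), {⟨u, hu2⟩, ⟨w, hw2⟩}})
        + rename Sum.inl (G1.forestPoly {({⟨u, hu1⟩} : Finset ↥S1), {⟨v, hv1⟩, ⟨w, hw1⟩}})
          * rename Sum.inr (G2.forestPoly {({⟨w, hw2⟩} : Finset ↥S2), {⟨u, hu2⟩, ⟨v, hv2⟩}})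
        + rename Sum.inl (G1.forestPoly {({⟨v, hv1⟩} : Finset ↥S1), {⟨u, hu1⟩, ⟨w, hw1⟩}})
          * rename Sum.inr (G2.forestPoly {({⟨u, hu2⟩} : Finset ↥S2), {⟨v, hv2⟩, ⟨w, hw2⟩}})
        + rename Sum.inl (G1.forestPoly {({⟨v, hv1⟩} : Finset ↥S1), {⟨u, hu1⟩, ⟨w, hw1⟩}})
          * rename Sum.inr (G2.forestPoly {({⟨w, hw2⟩} : Finset ↥S2), {⟨u, hu2⟩, ⟨v, hv2⟩}})
        + rename Sum.inl (G1.forestPoly {({⟨w, hw1⟩} : Finset ↥S1), {⟨u, hu1⟩, ⟨v, hv1⟩}})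
          * rename Sum.inr (G2.forestPoly {({⟨u, hu2⟩} : Finset ↥S2), {⟨v, hv2⟩, ⟨w, hw2⟩}})
        + rename Sum.inl (G1.forestPoly {({⟨w, hw1⟩} : Finset ↥S1), {⟨u, hu1⟩, ⟨v, hv1⟩}})
          * rename Sum.inr (G2.forestPoly {({⟨v, hv2⟩} : Finset ↥S2), {⟨u, hu2⟩, ⟨w, hw2⟩}})
        + rename Sum.inl G1.kirchhoff
          * rename Sum.inr
            (G2.forestPoly {({⟨u, hu2⟩} : Finset ↥S2), {⟨v, hv2⟩}, {⟨w, hw2⟩}}) := by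
  obtain rfl : G = G1.glue G2 := by
    cases G
    congr <;> funext e <;> cases e <;> simp_all
  simp only [Multigraph.kirchhoff, Multigraph.forestPoly, rename_sum_ite_mul_rename_sum_ite,
    ← Finset.sum_add_distrib]
  rw [Fintype.sum_finset_sum_eq_sum_disjSum]
  refine Finset.sum_congr rfl fun F1 _ => Finset.sum_congr rfl fun F2 _ => ?_
  exact Multigraph.ite_isSpanningTree_glue (M := MvPolynomial (E1 ⊕ E2) ℚ) hu1 hu2 hv1 hv2 hw1 hw2
    _ huv huw hvw hcover hinter

open MvPolynomial in
/-- **three-vertex join decomposition.**  If `G` is glued from `G'` (edges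
`E1`, vertex set `S1`) and `G''` (edges `E2`, vertex set `S2`) along the three common
vertices `S1 ∩ S2 = {u, v, w}`, then `Ψ_G` is the eight-term sum
`Φ'^{u|v|w}Ψ'' + Φ'^{u|vw}Φ''^{v|uw} + Φ'^{u|vw}Φ''^{w|uv} + Φ'^{v|uw}Φ''^{u|vw}
 + Φ'^{v|uw}Φ''^{w|uv} + Φ'^{w|uv}Φ''^{u|vw} + Φ'^{w|uv}Φ''^{v|uw} + Ψ'Φ''^{u|v|w}`. -/
theorem three_vertex_join_kirchhoff {E1 E2 V : Type*} [Fintype E1] [DecidableEq E1]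
    [Fintype E2] [DecidableEq E2] [Fintype V] [DecidableEq V]
    (S1 S2 : Finset V) (u v w : V) (huv : u ≠ v) (huw : u ≠ w) (hvw : v ≠ w)
    (hcover : S1 ∪ S2 = Finset.univ) (hinter : S1 ∩ S2 = {u, v, w})
    (hu1 : u ∈ S1) (hu2 : u ∈ S2) (hv1 : v ∈ S1) (hv2 : v ∈ S2)
    (hw1 : w ∈ S1) (hw2 : w ∈ S2)
    (G1 : Multigraph E1 ↥S1) (G2 : Multigraph E2 ↥S2) (G : Multigraph (E1 ⊕ E2) V)
    (hsrc1 : ∀ e, G.src (Sum.inl e) = ↑(G1.src e))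
    (htgt1 : ∀ e, G.tgt (Sum.inl e) = ↑(G1.tgt e))
    (hsrc2 : ∀ e, G.src (Sum.inr e) = ↑(G2.src e))
    (htgt2 : ∀ e, G.tgt (Sum.inr e) = ↑(G2.tgt e))
    (hconn : G.Connected) :
    G.kirchhoff
      = rename Sum.inl (G1.forestPoly {({⟨u, hu1⟩} : Finset ↥S1), {⟨v, hv1⟩}, {⟨w, hw1⟩}})
          * rename Sum.inr G2.kirchhoff
        + rename Sum.inl (G1.forestPoly {({⟨u, hu1⟩} : Finset ↥S1), {⟨v, hv1⟩, ⟨w, hw1⟩}})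
          * rename Sum.inr (G2.forestPoly {({⟨v, hv2⟩} : Finset ↥S2), {⟨u, hu2⟩, ⟨w, hw2⟩}})
        + rename Sum.inl (G1.forestPoly {({⟨u, hu1⟩} : Finset ↥S1), {⟨v, hv1⟩, ⟨w, hw1⟩}})
          * rename Sum.inr (G2.forestPoly {({⟨w, hw2⟩} : Finset ↥S2), {⟨u, hu2⟩, ⟨v, hv2⟩}})
        + rename Sum.inl (G1.forestPoly {({⟨v, hv1⟩} : Finset ↥S1), {⟨u, hu1⟩, ⟨w, hw1⟩}})
          * rename Sum.inr (G2.forestPoly {({⟨u, hu2⟩} : Finset ↥S2), {⟨v, hv2⟩, ⟨w, hw2⟩}})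
        + rename Sum.inl (G1.forestPoly {({⟨v, hv1⟩} : Finset ↥S1), {⟨u, hu1⟩, ⟨w, hw1⟩}})
          * rename Sum.inr (G2.forestPoly {({⟨w, hw2⟩} : Finset ↥S2), {⟨u, hu2⟩, ⟨v, hv2⟩}})
        + rename Sum.inl (G1.forestPoly {({⟨w, hw1⟩} : Finset ↥S1), {⟨u, hu1⟩, ⟨v, hv1⟩}})
          * rename Sum.inr (G2.forestPoly {({⟨u, hu2⟩} : Finset ↥S2), {⟨v, hv2⟩, ⟨w, hw2⟩}})
        + rename Sum.inl (G1.forestPoly {({⟨w, hw1⟩} : Finset ↥S1), {⟨u, hu1⟩, ⟨v, hv1⟩}})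
          * rename Sum.inr (G2.forestPoly {({⟨v, hv2⟩} : Finset ↥S2), {⟨u, hu2⟩, ⟨w, hw2⟩}})
        + rename Sum.inl G1.kirchhoff
          * rename Sum.inr
            (G2.forestPoly {({⟨u, hu2⟩} : Finset ↥S2), {⟨v, hv2⟩}, {⟨w, hw2⟩}}) :=
  three_vertex_join_kirchhoff_general S1 S2 u v w huv huw hvw hcover hinter hu1 hu2 hv1 hv2 hw1 hw2
    G1 G2 G hsrc1 htgt1 hsrc2 htgt2
end
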